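/- arXiv:0908.2750 — 5 statements merged into one kernel-verified Lean document; each statement's English description precedes it below -/
import Mathlib

section
/- Let n = (2r+1)p with p ≥ 1. If p is even, the minimum size of an r-identifying code of the path P_n is (2r+1)p/2 + 1; if p is odd, it is (2r+1)(p-1)/2 + 2r. -/
/-- `Dr G r D x` = `N_r[x] ∩ D`. -/
def Dr {V : Type*} (G : SimpleGraph V) (r : ℕ) (D : Set V) (x : V) : Set V :=
  {y | y ∈ D ∧ G.dist x y ≤ r}

/-- `D` is an `r`-identifying code of `G`. -/
def IsIdCode {V : Type*} (G : SimpleGraph V) (r : ℕ) (D : Set V) : Prop :=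
  (∀ x, (Dr G r D x).Nonempty) ∧ ∀ x y, x ≠ y → Dr G r D x ≠ Dr G r D y

/-- `D` is an `r`-locating-dominating set of `G`. -/
def IsLD {V : Type*} (G : SimpleGraph V) (r : ℕ) (D : Set V) : Prop :=
  (∀ x ∉ D, (Dr G r D x).Nonempty) ∧
    ∀ x ∉ D, ∀ y ∉ D, x ≠ y → Dr G r D x ≠ Dr G r D y

/-- The cycle graph on `ZMod n`. -/
def cycleG (n : ℕ) : SimpleGraph (ZMod n) :=
  SimpleGraph.fromRel (fun x y => x - y = 1)

/-!
Cut the path on `(2r+1)p` vertices into `p` blocks of `2r+1` consecutive vertices and write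
vertex `(2r+1)q + t` as offset `t` of block `q`. The only vertices that can separate the
consecutive vertices `(2r+1)q + t + r` and `(2r+1)q + t + r + 1` are `(2r+1)q + t` and
`(2r+1)(q+1) + t`, so for each offset `t` the blocks carrying a codeword at offset `t` form a
vertex cover of a path on `p` vertices, of size at least `⌊p/2⌋`, and larger if it contains an
end block. Separating neighbouring vertices near the two ends puts the first block into every
column of offset `t > r` and the last block into every column of offset `t < r`; with the
codewords near the two end vertices, for even `p` some column contains both end blocks. These
bounds add up to the claimed values, and they are attained by codes that alternate between two
patterns from block to block.
-/

open SimpleGraph Finset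

section PathGraph

variable {n : ℕ}

lemma pathGraph_walk_length_ge {u v : Fin n} (w : (pathGraph n).Walk u v) :
    u - v + (v - u) ≤ w.length := by
  induction w with
  | nil => simp
  | cons h w ih =>
    rw [pathGraph_adj] at h
    rw [Walk.length_cons]
    omega

lemma exists_pathGraph_walk_length (k : ℕ) :
    ∀ u v : Fin n, (v : ℕ) = u + k → ∃ w : (pathGraph n).Walk u v, w.length = k := by
  induction k with
  | zero =>
    intro u v h
    obtain rfl : u = v := Fin.ext (by omega)
    exact ⟨Walk.nil, rfl⟩
  | succ k ih =>
    intro u v h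
    let u' : Fin n := ⟨u + 1, by omega⟩
    have hadj : (pathGraph n).Adj u u' := pathGraph_adj.2 (Or.inl rfl)
    obtain ⟨w, hw⟩ := ih u' v (by simp only [u']; omega)
    exact ⟨Walk.cons hadj w, by simp [hw]⟩

lemma pathGraph_dist (u v : Fin n) : (pathGraph n).dist u v = u - v + (v - u) := by
  wlog h : (u : ℕ) ≤ v generalizing u v
  · rw [dist_comm, this v u (by omega)]
    omega
  obtain ⟨w, hw⟩ := (pathGraph_preconnected n u v).exists_walk_length_eq_dist
  obtain ⟨w', hw'⟩ := exists_pathGraph_walk_length (v - u) u v (by omega)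
  have := pathGraph_walk_length_ge w
  have := dist_le w'
  omega

end PathGraph

section Criterion

variable {n r : ℕ} {Q : ℕ → Prop}

/-- Vertices `x < y` with the same codewords nearby are within `2r` of each other, and then one of
`x - r`, `x + r + 1`, `y - r - 1`, `y + r`, `2r` is a codeword near exactly one of them. -/
lemma exists_separating_of_window (hn : 2 * r + 1 ≤ n)
    (hdom : ∀ x < n, ∃ c < n, Q c ∧ x - c + (c - x) ≤ r)
    (hwin : ∀ j, j + 2 * r + 2 ≤ n → Q j ∨ Q (j + 2 * r + 1))
    (hfirst : ∀ s, r < s → s ≤ 2 * r → Q s)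
    (hlast : ∀ s, n ≤ s + 2 * r + 1 → s + r + 2 ≤ n → Q s)
    {x y : ℕ} (hxy : x < y) (hy : y < n) :
    ∃ c < n, Q c ∧ ¬(x - c + (c - x) ≤ r ↔ y - c + (c - y) ≤ r) := by
  by_contra! h
  obtain ⟨c₀, hc₀, hQ₀, hx₀⟩ := hdom x (by omega)
  have hyx : y ≤ x + 2 * r := by have := (h c₀ hc₀ hQ₀).1 hx₀; omega
  by_cases hyr : y ≤ r
  · have := h (x + r + 1) (by omega) (hfirst _ (by omega) (by omega))
    omega
  by_cases hyn : y + r + 1 ≤ n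
  · rcases hwin (y - r - 1) (by omega) with hQ | hQ
    · have := h (y - r - 1) (by omega) hQ
      omega
    · have := h (y - r - 1 + 2 * r + 1) (by omega) hQ
      omega
  by_cases hxn : n ≤ x + r + 1
  · have := h (x - r) (by omega) (hlast _ (by omega) (by omega))
    omega
  by_cases hxr : x < r
  · have := h (2 * r) (by omega) (hfirst _ (by omega) le_rfl)
    omega
  rcases hwin (x - r) (by omega) with hQ | hQ
  · have := h (x - r) (by omega) hQ
    omega
  · have := h (x - r + 2 * r + 1) (by omega) hQ
    omega

lemma isIdCode_of_window (hn : 2 * r + 1 ≤ n)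
    (hdom : ∀ x < n, ∃ c < n, Q c ∧ x - c + (c - x) ≤ r)
    (hwin : ∀ j, j + 2 * r + 2 ≤ n → Q j ∨ Q (j + 2 * r + 1))
    (hfirst : ∀ s, r < s → s ≤ 2 * r → Q s)
    (hlast : ∀ s, n ≤ s + 2 * r + 1 → s + r + 2 ≤ n → Q s) :
    IsIdCode (pathGraph n) r {x : Fin n | Q x} := by
  have hDr (x c : Fin n) : c ∈ Dr (pathGraph n) r {x : Fin n | Q x} x ↔
      Q c ∧ x - c + (c - x) ≤ r := by
    simp only [Dr, Set.mem_ofPred_eq, pathGraph_dist]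
  refine ⟨fun x => ?_, fun x y hxy hD => ?_⟩
  · obtain ⟨c, hc, hQ, hxc⟩ := hdom x x.isLt
    exact ⟨⟨c, hc⟩, (hDr _ _).2 ⟨hQ, hxc⟩⟩
  · have key : ∀ a b : Fin n, (a : ℕ) < b →
        Dr (pathGraph n) r {x : Fin n | Q x} a ≠ Dr (pathGraph n) r {x : Fin n | Q x} b := by
      intro a b hab hD
      obtain ⟨c, hc, hQ, hsep⟩ :=
        exists_separating_of_window hn hdom hwin hfirst hlast hab b.isLt
      have := Set.ext_iff.1 hD ⟨c, hc⟩
      rw [hDr, hDr] at this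
      exact hsep ⟨fun h => (this.1 ⟨hQ, h⟩).2, fun h => (this.2 ⟨hQ, h⟩).2⟩
    rcases lt_trichotomy (x : ℕ) y with h | h | h
    · exact key x y h hD
    · exact hxy (Fin.ext h)
    · exact key y x h hD.symm

end Criterion

section Blocks

variable {m p q t : ℕ}

lemma mul_add_div_mod (ht : t < m) : (m * q + t) / m = q ∧ (m * q + t) % m = t := by
  rw [Nat.mul_add_div (by omega), Nat.div_eq_of_lt ht, Nat.mul_add_mod, Nat.mod_eq_of_lt ht]
  exact ⟨rfl, rfl⟩

lemma mul_add_lt_mul (hq : q < p) (ht : t < m) : m * q + t < m * p := by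
  have := Nat.mul_le_mul_left m (Nat.succ_le_of_lt hq)
  rw [Nat.mul_succ] at this
  omega

lemma lt_of_mul_add_lt_mul (h : m * q + t < m * p) : q < p := by
  by_contra! hpq
  have := Nat.mul_le_mul_left m hpq
  omega

lemma mul_sub_one_add (hp : 0 < p) : m * (p - 1) + m = m * p := by
  rw [← Nat.mul_succ, Nat.succ_eq_add_one, Nat.sub_add_cancel hp]

/-- Vertex `m * q + t` (`t < m`) of the path on `m * p` vertices is the vertex of offset `t` in
block `q`. -/
def blockSet (m p : ℕ) (P : ℕ → ℕ → Prop) : Set (Fin (m * p)) :=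
  {x | P (x / m) (x % m)}

open scoped Classical in
noncomputable def column (D : Set (Fin (m * p))) (t : ℕ) : Finset ℕ :=
  {q ∈ range p | ∃ x ∈ D, (x : ℕ) = m * q + t}

lemma mem_column {D : Set (Fin (m * p))} :
    q ∈ column D t ↔ q < p ∧ ∃ x ∈ D, (x : ℕ) = m * q + t := by
  simp [column]

lemma mem_column_blockSet {P : ℕ → ℕ → Prop} (ht : t < m) :
    q ∈ column (blockSet m p P) t ↔ q < p ∧ P q t := by
  rw [mem_column]
  refine and_congr_right fun hq =>
    ⟨?_, fun h => ⟨⟨m * q + t, mul_add_lt_mul hq ht⟩, ?_, rfl⟩⟩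
  · rintro ⟨x, hx, hxq⟩
    simpa only [blockSet, Set.mem_ofPred_eq, hxq, mul_add_div_mod ht] using hx
  · simpa only [blockSet, Set.mem_ofPred_eq, mul_add_div_mod ht] using h

lemma ncard_eq_sum_card_column (hm : 0 < m) (D : Set (Fin (m * p))) :
    D.ncard = ∑ t ∈ range m, #(column D t) := by
  classical
  rw [Set.ncard_eq_toFinset_card', card_eq_sum_card_fiberwise (f := fun x : Fin (m * p) => x % m)
    (fun x _ => mem_range.2 (Nat.mod_lt _ hm))]
  refine sum_congr rfl fun t ht => card_bij (fun x _ => x / m) ?_ ?_ ?_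
  · intro x hx
    rw [mem_filter, Set.mem_toFinset] at hx
    refine mem_column.2 ⟨Nat.div_lt_of_lt_mul x.isLt, x, hx.1, ?_⟩
    rw [← hx.2, Nat.div_add_mod]
  · intro x hx y hy hxy
    rw [mem_filter] at hx hy
    apply Fin.ext
    rw [← Nat.div_add_mod x m, ← Nat.div_add_mod y m, hx.2, hy.2]
    exact congrArg (m * · + t) hxy
  · intro q hq
    obtain ⟨hqp, x, hx, hxq⟩ := mem_column.1 hq
    have := mul_add_div_mod (q := q) (mem_range.1 ht)
    exact ⟨x, mem_filter.2 ⟨Set.mem_toFinset.2 hx, by simp only [hxq, this.2]⟩, by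
      simp only [hxq, this.1]⟩

end Blocks

lemma isIdCode_blockSet {r p : ℕ} {P : ℕ → ℕ → Prop} (hp : 0 < p)
    (hdom : ∀ q < p, ∀ t < 2 * r + 1, ∃ t' < 2 * r + 1, P q t' ∧ t - t' + (t' - t) ≤ r)
    (hadj : ∀ q t, q + 1 < p → t < 2 * r + 1 → P q t ∨ P (q + 1) t)
    (hfirst : ∀ t, r < t → t ≤ 2 * r → P 0 t)
    (hlast : ∀ t < r, P (p - 1) t) :
    IsIdCode (pathGraph ((2 * r + 1) * p)) r (blockSet (2 * r + 1) p P) := by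
  set m := 2 * r + 1 with hm
  have hlastBlock := mul_sub_one_add (m := m) hp
  refine isIdCode_of_window (Q := fun c => P (c / m) (c % m)) (by omega) ?_ ?_ ?_ ?_
  · intro x hx
    have hq := Nat.div_lt_of_lt_mul hx
    obtain ⟨t', ht', hP, hdist⟩ := hdom _ hq _ (Nat.mod_lt x (by omega))
    refine ⟨m * (x / m) + t', mul_add_lt_mul hq ht', ?_, ?_⟩
    · simpa only [mul_add_div_mod ht'] using hP
    · have := Nat.div_add_mod x m
      omega
  · intro j hj
    have hjm := Nat.div_add_mod j m
    have hq : j / m + 1 < p := by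
      refine lt_of_mul_add_lt_mul (m := m) (t := j % m) ?_
      rw [Nat.mul_succ]
      omega
    have hshift : j + 2 * r + 1 = j + m := by omega
    simpa only [hshift, Nat.add_div_right _ (by omega : 0 < m), Nat.add_mod_right]
      using hadj _ _ hq (Nat.mod_lt j (by omega))
  · intro s hs hs'
    simpa only [Nat.div_eq_of_lt (by omega : s < m), Nat.mod_eq_of_lt (by omega : s < m)]
      using hfirst s hs hs'
  · intro s hs hs'
    obtain ⟨t, rfl⟩ : ∃ t, s = m * (p - 1) + t := ⟨s - m * (p - 1), by omega⟩
    simpa only [mul_add_div_mod (by omega : t < m)] using hlast t (by omega)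

def IsPathVertexCover (p : ℕ) (T : Finset ℕ) : Prop :=
  ∀ i, i + 1 < p → i ∈ T ∨ i + 1 ∈ T

namespace IsPathVertexCover

variable {p : ℕ} {T : Finset ℕ}

lemma le_card_inter_Ico_two_mul (h : IsPathVertexCover p T) {a : ℕ} :
    ∀ k, a + 2 * k ≤ p → k ≤ #(T ∩ Ico a (a + 2 * k))
  | 0, _ => Nat.zero_le _
  | k + 1, hk => by
    rw [← Ico_union_Ico_eq_Ico (a := a) (b := a + 2 * k) (c := a + 2 * (k + 1)) (by omega)
      (by omega), inter_union_distrib_left,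
      card_union_of_disjoint ((Ico_disjoint_Ico_consecutive _ _ _).mono inter_subset_right
        inter_subset_right)]
    have hpair : (T ∩ Ico (a + 2 * k) (a + 2 * (k + 1))).Nonempty := by
      rcases h (a + 2 * k) (by omega) with hT | hT
      · exact ⟨_, mem_inter.2 ⟨hT, mem_Ico.2 ⟨le_rfl, by omega⟩⟩⟩
      · exact ⟨_, mem_inter.2 ⟨hT, mem_Ico.2 ⟨by omega, by omega⟩⟩⟩
    have := le_card_inter_Ico_two_mul h (a := a) k (by omega)
    have := hpair.card_pos
    omega

lemma le_card_inter_Ico (h : IsPathVertexCover p T) {a b : ℕ} (hb : b ≤ p) :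
    (b - a) / 2 ≤ #(T ∩ Ico a b) := by
  rcases lt_or_ge b a with hab | hab
  · omega
  exact (h.le_card_inter_Ico_two_mul _ (by omega)).trans <|
    card_le_card <| inter_subset_inter_left <| Ico_subset_Ico_right (by omega)

lemma half_le_card (h : IsPathVertexCover p T) : p / 2 ≤ #T :=
  (h.le_card_inter_Ico (a := 0) le_rfl).trans (card_le_card inter_subset_left)

lemma le_card_of_zero_mem (h : IsPathVertexCover p T) (h0 : 0 ∈ T) : (p + 1) / 2 ≤ #T := by
  have := h.le_card_inter_Ico (a := 1) le_rfl
  have := card_le_card (insert_subset h0 (inter_subset_left (s₂ := Ico 1 p)))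
  rw [card_insert_of_notMem (by simp)] at this
  omega

lemma le_card_of_last_mem (h : IsPathVertexCover p T) (hl : p - 1 ∈ T) : (p + 1) / 2 ≤ #T := by
  have := h.le_card_inter_Ico (a := 0) (b := p - 1) (by omega)
  have := card_le_card (insert_subset hl (inter_subset_left (s₂ := Ico 0 (p - 1))))
  rw [card_insert_of_notMem (by simp)] at this
  omega

lemma le_card_of_zero_mem_of_last_mem (h : IsPathVertexCover p T) (h0 : 0 ∈ T)
    (hl : p - 1 ∈ T) :
    p / 2 + 1 ≤ #T := by
  rcases Nat.lt_or_ge p 2 with hp | hp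
  · have := card_pos.2 ⟨0, h0⟩
    omega
  have := h.le_card_inter_Ico (a := 1) (b := p - 1) (by omega)
  have := card_le_card <|
    insert_subset h0 (insert_subset hl (inter_subset_left (s₂ := Ico 1 (p - 1))))
  rw [card_insert_of_notMem (by simp; omega), card_insert_of_notMem (by simp)] at this
  omega

end IsPathVertexCover

lemma sum_range_ite_eq_add {m s a b : ℕ} (hs : s < m) :
    ∑ t ∈ range m, (if t = s then b else a) = b + (m - 1) * a := by
  rw [← add_sum_erase _ _ (mem_range.2 hs), if_pos rfl,
    sum_congr rfl fun t ht => if_neg (ne_of_mem_erase ht), sum_const,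
    card_erase_of_mem (mem_range.2 hs), card_range, smul_eq_mul]

lemma mul_two_mul_div_two (r u : ℕ) : (2 * r + 1) * (2 * u) / 2 = u + 2 * r * u := by
  rw [show (2 * r + 1) * (2 * u) = 2 * (u + 2 * r * u) by ring, Nat.mul_div_cancel_left _ two_pos]

namespace IsIdCode

section Path

variable {n r : ℕ} {D : Set (Fin n)}

lemma exists_mem_near (hD : IsIdCode (pathGraph n) r D) (x : Fin n) :
    ∃ c ∈ D, x - c + (c - x) ≤ r := by
  obtain ⟨c, hc, hxc⟩ := hD.1 x
  exact ⟨c, hc, pathGraph_dist x c ▸ hxc⟩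

lemma exists_mem_separating_succ (hD : IsIdCode (pathGraph n) r D) {a : ℕ} (ha : a + 1 < n) :
    ∃ c ∈ D, (c : ℕ) + r = a ∨ (c : ℕ) = a + 1 + r := by
  have hne := hD.2 ⟨a, by omega⟩ ⟨a + 1, ha⟩ (by simp [Fin.ext_iff])
  by_contra! h
  refine hne (Set.ext fun c => ?_)
  simp only [Dr, Set.mem_ofPred_eq, pathGraph_dist]
  by_cases hc : c ∈ D
  · have := h c hc
    simp only [hc, true_and]
    omega
  · simp only [hc, false_and]

end Path

variable {r p t : ℕ} {D : Set (Fin ((2 * r + 1) * p))}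
  (hD : IsIdCode (pathGraph ((2 * r + 1) * p)) r D)
include hD

lemma isPathVertexCover_column (ht : t < 2 * r + 1) : IsPathVertexCover p (column D t) := by
  intro i hi
  have hnext := mul_add_lt_mul (m := 2 * r + 1) hi ht
  rw [Nat.mul_succ] at hnext
  obtain ⟨c, hc, hc' | hc'⟩ := hD.exists_mem_separating_succ (a := (2 * r + 1) * i + t + r)
    (by omega)
  · exact Or.inl (mem_column.2 ⟨by omega, c, hc, by omega⟩)
  · exact Or.inr (mem_column.2 ⟨hi, c, hc, by rw [Nat.mul_succ]; omega⟩)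

lemma zero_mem_column (hp : 0 < p) (ht : r < t) (ht' : t ≤ 2 * r) : 0 ∈ column D t := by
  have := mul_add_lt_mul (m := 2 * r + 1) (t := 2 * r) hp (by omega)
  obtain ⟨c, hc, hc' | hc'⟩ := hD.exists_mem_separating_succ (a := t - r - 1) (by omega)
  · omega
  · exact mem_column.2 ⟨hp, c, hc, by omega⟩

lemma last_mem_column (hp : 0 < p) (ht : t < r) : p - 1 ∈ column D t := by
  have := mul_sub_one_add (m := 2 * r + 1) hp
  obtain ⟨c, hc, hc' | hc'⟩ :=
    hD.exists_mem_separating_succ (a := (2 * r + 1) * (p - 1) + t + r) (by omega)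
  · exact mem_column.2 ⟨by omega, c, hc, by omega⟩
  · have := c.isLt
    omega

lemma exists_zero_mem_column (hp : 0 < p) : ∃ t ≤ r, 0 ∈ column D t := by
  have := mul_add_lt_mul (m := 2 * r + 1) (t := 0) hp (by omega)
  obtain ⟨c, hc, hc'⟩ := hD.exists_mem_near ⟨0, by omega⟩
  exact ⟨c, by simpa using hc', mem_column.2 ⟨hp, c, hc, by simp⟩⟩

lemma exists_last_mem_column (hp : 0 < p) :
    ∃ t, r ≤ t ∧ t ≤ 2 * r ∧ p - 1 ∈ column D t := by
  have := mul_sub_one_add (m := 2 * r + 1) hp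
  obtain ⟨c, hc, hc'⟩ := hD.exists_mem_near ⟨(2 * r + 1) * p - 1, by omega⟩
  have := c.isLt
  simp only at hc'
  refine ⟨c - (2 * r + 1) * (p - 1), by omega, by omega,
    mem_column.2 ⟨by omega, c, hc, by omega⟩⟩

lemma exists_zero_mem_column_last_mem_column (hp : 0 < p) :
    ∃ t < 2 * r + 1, 0 ∈ column D t ∧ p - 1 ∈ column D t := by
  obtain ⟨t₀, ht₀, h₀⟩ := hD.exists_zero_mem_column hp
  obtain ⟨t₁, ht₁, ht₁', h₁⟩ := hD.exists_last_mem_column hp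
  rcases Nat.lt_or_ge t₀ r with h | h
  · exact ⟨t₀, by omega, h₀, hD.last_mem_column hp h⟩
  rcases Nat.lt_or_ge r t₁ with h' | h'
  · exact ⟨t₁, by omega, hD.zero_mem_column hp h' ht₁', h₁⟩
  obtain rfl : t₀ = r := by omega
  obtain rfl : t₁ = t₀ := by omega
  exact ⟨t₁, by omega, h₀, h₁⟩

lemma le_ncard_of_even (hp : 0 < p) (he : Even p) : (2 * r + 1) * p / 2 + 1 ≤ D.ncard := by
  obtain ⟨s, hs, h₀, hl⟩ := hD.exists_zero_mem_column_last_mem_column hp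
  rw [ncard_eq_sum_card_column (by omega)]
  obtain ⟨u, rfl⟩ := he
  calc (2 * r + 1) * (u + u) / 2 + 1
      = ∑ t ∈ range (2 * r + 1), if t = s then u + 1 else u := by
        rw [sum_range_ite_eq_add hs, ← two_mul, mul_two_mul_div_two]
        simp only [Nat.add_sub_cancel]
        ring
    _ ≤ ∑ t ∈ range (2 * r + 1), #(column D t) := by
      refine sum_le_sum fun t ht => ?_
      have hcover := hD.isPathVertexCover_column (mem_range.1 ht)
      split_ifs with h
      · subst h
        have := hcover.le_card_of_zero_mem_of_last_mem h₀ hl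
        omega
      · have := hcover.half_le_card
        omega

lemma le_ncard_of_odd (ho : Odd p) : (2 * r + 1) * (p - 1) / 2 + 2 * r ≤ D.ncard := by
  have hp : 0 < p := ho.pos
  rw [ncard_eq_sum_card_column (by omega)]
  obtain ⟨w, rfl⟩ := ho
  calc (2 * r + 1) * (2 * w + 1 - 1) / 2 + 2 * r
      = ∑ t ∈ range (2 * r + 1), if t = r then w else w + 1 := by
        rw [sum_range_ite_eq_add (by omega), Nat.add_sub_cancel, mul_two_mul_div_two]
        simp only [Nat.add_sub_cancel]
        ring
    _ ≤ ∑ t ∈ range (2 * r + 1), #(column D t) := by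
      refine sum_le_sum fun t ht => ?_
      have hcover := hD.isPathVertexCover_column (mem_range.1 ht)
      split_ifs with h
      · have := hcover.half_le_card
        omega
      rcases Nat.lt_or_gt_of_ne h with h | h
      · have := hcover.le_card_of_last_mem (hD.last_mem_column hp h)
        omega
      · have := hcover.le_card_of_zero_mem
          (hD.zero_mem_column hp h (by have := mem_range.1 ht; omega))
        omega

end IsIdCode

lemma card_filter_range_mod_two_eq_one (p : ℕ) : #{q ∈ range p | q % 2 = 1} = p / 2 := by
  induction p with
  | zero => rfl
  | succ p ih =>
    rw [range_add_one, filter_insert]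
    split_ifs with h
    · rw [card_insert_of_notMem (by simp), ih]
      omega
    · omega

lemma card_filter_range_mod_two_eq_zero (p : ℕ) : #{q ∈ range p | q % 2 = 0} = (p + 1) / 2 := by
  induction p with
  | zero => rfl
  | succ p ih =>
    rw [range_add_one, filter_insert]
    split_ifs with h
    · rw [card_insert_of_notMem (by simp), ih]
      omega
    · omega

section Codes

variable {r p : ℕ}

def evenCode (r p : ℕ) : Set (Fin ((2 * r + 1) * p)) :=
  blockSet (2 * r + 1) p fun q t =>
    (q % 2 = 0 ∧ (r ≤ t ∧ t < 2 * r ∨ q = 0 ∧ t = 2 * r)) ∨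
      (q % 2 = 1 ∧ (t < r ∨ t = 2 * r))

def oddCode (r p : ℕ) : Set (Fin ((2 * r + 1) * p)) :=
  blockSet (2 * r + 1) p fun q t => (q % 2 = 0 ∧ t ≠ r) ∨ (q % 2 = 1 ∧ t = r)

lemma isIdCode_evenCode (hr : 1 ≤ r) (he : Even p) (hp : 0 < p) :
    IsIdCode (pathGraph ((2 * r + 1) * p)) r (evenCode r p) := by
  refine isIdCode_blockSet hp ?_ (fun q t _ _ => by omega) (fun t _ _ => by omega) ?_
  · intro q _ t ht
    rcases Nat.mod_two_eq_zero_or_one q with hq | hq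
    · exact ⟨max r (min t (2 * r - 1)), by omega, by omega, by omega⟩
    · by_cases h : t = 2 * r
      · exact ⟨t, ht, by omega, by omega⟩
      · exact ⟨min t (r - 1), by omega, by omega, by omega⟩
  · obtain ⟨u, rfl⟩ := he
    intro t ht
    omega

lemma isIdCode_oddCode (hr : 1 ≤ r) (ho : Odd p) :
    IsIdCode (pathGraph ((2 * r + 1) * p)) r (oddCode r p) := by
  refine isIdCode_blockSet ho.pos ?_ (fun q t _ _ => by omega) (fun t _ _ => by omega) ?_
  · intro q _ t ht
    rcases Nat.mod_two_eq_zero_or_one q with hq | hq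
    · by_cases h : t = r
      · exact ⟨r + 1, by omega, by omega, by omega⟩
      · exact ⟨t, ht, by omega, by omega⟩
    · exact ⟨r, by omega, by omega, by omega⟩
  · obtain ⟨w, rfl⟩ := ho
    intro t ht
    omega

lemma ncard_evenCode (he : Even p) (hp : 0 < p) :
    (evenCode r p).ncard = (2 * r + 1) * p / 2 + 1 := by
  have hcol : ∀ t ∈ range (2 * r + 1),
      #(column (evenCode r p) t) = if t = 2 * r then p / 2 + 1 else p / 2 := by
    intro t ht
    have ht := mem_range.1 ht
    obtain ⟨u, rfl⟩ := he
    split_ifs with h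
    · rw [← card_filter_range_mod_two_eq_one, ← card_insert_of_notMem (a := 0) (by simp)]
      congr 1
      ext q
      simp only [evenCode, mem_column_blockSet ht, mem_insert, mem_filter, mem_range]
      omega
    · rcases Nat.lt_or_ge t r with h' | h'
      · rw [← card_filter_range_mod_two_eq_one]
        congr 1
        ext q
        simp only [evenCode, mem_column_blockSet ht, mem_filter, mem_range]
        omega
      · rw [show (u + u) / 2 = (u + u + 1) / 2 by omega, ← card_filter_range_mod_two_eq_zero]
        congr 1
        ext q
        simp only [evenCode, mem_column_blockSet ht, mem_filter, mem_range]
        omega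
  obtain ⟨u, rfl⟩ := he
  rw [ncard_eq_sum_card_column (by omega), sum_congr rfl hcol, sum_range_ite_eq_add (by omega),
    ← two_mul, mul_two_mul_div_two, Nat.mul_div_cancel_left u two_pos, Nat.add_sub_cancel]
  ring

lemma ncard_oddCode (ho : Odd p) :
    (oddCode r p).ncard = (2 * r + 1) * (p - 1) / 2 + 2 * r := by
  have hcol : ∀ t ∈ range (2 * r + 1),
      #(column (oddCode r p) t) = if t = r then p / 2 else (p + 1) / 2 := by
    intro t ht
    have ht := mem_range.1 ht
    split_ifs with h
    · rw [← card_filter_range_mod_two_eq_one]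
      congr 1
      ext q
      simp only [oddCode, mem_column_blockSet ht, mem_filter, mem_range]
      omega
    · rw [← card_filter_range_mod_two_eq_zero]
      congr 1
      ext q
      simp only [oddCode, mem_column_blockSet ht, mem_filter, mem_range]
      omega
  obtain ⟨w, rfl⟩ := ho
  rw [ncard_eq_sum_card_column (by omega), sum_congr rfl hcol, sum_range_ite_eq_add (by omega),
    show (2 * w + 1) / 2 = w by omega, show (2 * w + 1 + 1) / 2 = w + 1 by omega]
  simp only [Nat.add_sub_cancel, mul_two_mul_div_two]
  ring

end Codes

theorem stmt12 (r p : ℕ) (hr : 1 ≤ r) (hp : 1 ≤ p) :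
    (Even p → IsLeast {m | ∃ D : Set (Fin ((2*r+1)*p)),
        IsIdCode (SimpleGraph.pathGraph ((2*r+1)*p)) r D ∧ D.ncard = m}
      ((2*r+1)*p/2 + 1)) ∧
    (Odd p → IsLeast {m | ∃ D : Set (Fin ((2*r+1)*p)),
        IsIdCode (SimpleGraph.pathGraph ((2*r+1)*p)) r D ∧ D.ncard = m}
      ((2*r+1)*(p-1)/2 + 2*r)) := by
  constructor
  · intro he
    refine ⟨⟨evenCode r p, isIdCode_evenCode hr he hp, ncard_evenCode he hp⟩, ?_⟩
    rintro _ ⟨D, hD, rfl⟩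
    exact hD.le_ncard_of_even hp he
  · intro ho
    refine ⟨⟨oddCode r p, isIdCode_oddCode hr ho, ncard_oddCode ho⟩, ?_⟩
    rintro _ ⟨D, hD, rfl⟩
    exact hD.le_ncard_of_odd ho
end

section
/- Let n = (2r+1)p + q with p ≥ 1 and 1 ≤ q ≤ r+1. If p is even, the minimum size of an r-identifying code of the path P_n is (2r+1)p/2 + q; if p is odd, it is (2r+1)(p-1)/2 + 2r + 1. -/
open SimpleGraph

lemma pg_walk_le {n : ℕ} {u v : Fin n} (w : (pathGraph n).Walk u v) :
    (max u.1 v.1 - min u.1 v.1 : ℕ) ≤ w.length := by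
  induction w with
  | nil => simp
  | @cons a b c h w ih =>
    rw [pathGraph_adj] at h
    simp only [Walk.length_cons]
    omega

lemma pg_walk_exists {n : ℕ} (d : ℕ) : ∀ (u v : Fin n), v.1 = u.1 + d →
    ∃ w : (pathGraph n).Walk u v, w.length = d := by
  induction d with
  | zero => intro u v h; obtain rfl : u = v := Fin.ext (by omega); exact ⟨.nil, rfl⟩
  | succ d ih =>
    intro u v h
    have hu1 : u.1 + 1 < n := by have := v.2; omega
    have hadj : (pathGraph n).Adj u ⟨u.1 + 1, hu1⟩ := by rw [pathGraph_adj]; left; rfl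
    obtain ⟨w, hw⟩ := ih ⟨u.1 + 1, hu1⟩ v (by simp; omega)
    exact ⟨.cons hadj w, by simp [hw]⟩

lemma pg_dist {n : ℕ} (u v : Fin n) :
    (pathGraph n).dist u v = max u.1 v.1 - min u.1 v.1 := by
  rcases le_total u.1 v.1 with h | h
  · obtain ⟨w, hw⟩ := pg_walk_exists (v.1 - u.1) u v (by omega)
    have h1 := SimpleGraph.dist_le w
    have h2 : (pathGraph n).Reachable u v := ⟨w⟩
    obtain ⟨w', hw'⟩ := h2.exists_walk_length_eq_dist
    have := pg_walk_le w'
    omega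
  · obtain ⟨w, hw⟩ := pg_walk_exists (u.1 - v.1) v u (by omega)
    have h1 := SimpleGraph.dist_le w
    have h2 : (pathGraph n).Reachable v u := ⟨w⟩
    obtain ⟨w', hw'⟩ := h2.exists_walk_length_eq_dist
    have h3 := pg_walk_le w'
    rw [SimpleGraph.dist_comm]
    omega

open SimpleGraph

/-- arithmetic characterization of identifying codes on the path -/
def okSet (n r : ℕ) (S : Set ℕ) : Prop :=
  (∀ x, x < n → ∃ d ∈ S, d ≤ x + r ∧ x ≤ d + r) ∧
  (∀ j, j + 1 < n → (r ≤ j ∧ j - r ∈ S) ∨ (j + r + 1 < n ∧ j + r + 1 ∈ S))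

lemma mem_Dr_iff {n r : ℕ} (D : Set (Fin n)) (x y : Fin n) :
    y ∈ Dr (pathGraph n) r D x ↔ y ∈ D ∧ y.1 ≤ x.1 + r ∧ x.1 ≤ y.1 + r := by
  unfold Dr
  simp only [Set.mem_setOf_eq, pg_dist]
  constructor
  · rintro ⟨h1, h2⟩; exact ⟨h1, by omega, by omega⟩
  · rintro ⟨h1, h2, h3⟩; exact ⟨h1, by omega⟩

lemma idcode_iff {n r : ℕ} (D : Set (Fin n)) :
    IsIdCode (pathGraph n) r D ↔ okSet n r (Fin.val '' D) := by
  constructor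
  · rintro ⟨hne, hsep⟩
    constructor
    · intro x hx
      obtain ⟨d, hd⟩ := hne ⟨x, hx⟩
      rw [mem_Dr_iff] at hd
      exact ⟨d.1, ⟨d, hd.1, rfl⟩, hd.2.1, hd.2.2⟩
    · intro j hj
      have hj1 : j < n := by omega
      have hcontra := hsep ⟨j, hj1⟩ ⟨j+1, hj⟩ (by simp [Fin.ext_iff])
      have : ∃ d, ¬ (d ∈ Dr (pathGraph n) r D ⟨j, hj1⟩ ↔ d ∈ Dr (pathGraph n) r D ⟨j+1, hj⟩) := by
        by_contra hc
        push_neg at hc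
        exact hcontra (Set.ext fun d => hc d)
      obtain ⟨d, hd⟩ := this
      rw [mem_Dr_iff, mem_Dr_iff] at hd
      by_cases hdD : d ∈ D
      · simp only [hdD, true_and] at hd
        rcases Nat.lt_or_ge d.1 (j + 1) with h | h
        · left
          have : d.1 = j - r ∧ r ≤ j := by omega
          exact ⟨this.2, ⟨d, hdD, this.1⟩⟩
        · right
          have h2 : d.1 = j + r + 1 := by omega
          exact ⟨h2 ▸ d.2, ⟨d, hdD, h2⟩⟩
      · simp [hdD] at hd
  · rintro ⟨hdom, hsep⟩
    have key : ∀ x y : Fin n, x.1 < y.1 → Dr (pathGraph n) r D x ≠ Dr (pathGraph n) r D y := by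
      intro x y hxy
      rcases Nat.lt_or_ge (x.1 + 2*r + 1) y.1 with hfar | hnear
      · -- balls disjoint; use domination at x
        obtain ⟨d, ⟨d', hd'D, rfl⟩, h1, h2⟩ := hdom x.1 x.2
        intro heq
        have hx : d' ∈ Dr (pathGraph n) r D x := (mem_Dr_iff D x d').2 ⟨hd'D, h1, h2⟩
        rw [heq, mem_Dr_iff] at hx
        omega
      · have hj := hsep x.1 (by omega)
        rcases hj with ⟨hrx, ⟨d', hd'D, hd'⟩⟩ | ⟨hlt, ⟨d', hd'D, hd'⟩⟩
        · intro heq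
          have hx : d' ∈ Dr (pathGraph n) r D x := (mem_Dr_iff D x d').2 ⟨hd'D, by omega, by omega⟩
          rw [heq, mem_Dr_iff] at hx
          omega
        · intro heq
          have hy : d' ∈ Dr (pathGraph n) r D y := (mem_Dr_iff D y d').2 ⟨hd'D, by omega, by omega⟩
          rw [← heq, mem_Dr_iff] at hy
          omega
    constructor
    · intro x
      obtain ⟨d, ⟨d', hd'D, rfl⟩, h1, h2⟩ := hdom x.1 x.2
      exact ⟨d', (mem_Dr_iff D x d').2 ⟨hd'D, h1, h2⟩⟩
    · intro x y hxy
      rcases Nat.lt_or_ge x.1 y.1 with h | h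
      · exact key x y h
      · have : y.1 < x.1 := by
          rcases Nat.lt_or_ge y.1 x.1 with h' | h'
          · exact h'
          · exact absurd (Fin.ext (by omega)) hxy
        exact (key y x this).symm

open Finset

variable {P Q : ℕ → Prop} [DecidablePred P] [DecidablePred Q]

def cardf (L : ℕ) (P : ℕ → Prop) [DecidablePred P] : ℕ := ((range L).filter P).card

lemma cardf_succ (L : ℕ) : cardf (L+1) P = cardf L P + (if P L then 1 else 0) := by
  unfold cardf
  rw [Finset.card_filter, Finset.card_filter, Finset.sum_range_succ]

lemma cardf_shift (L : ℕ) : cardf (L+1) P = (if P 0 then 1 else 0) + cardf L (fun k => P (k+1)) := by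
  unfold cardf
  rw [Finset.card_filter, Finset.card_filter, Finset.sum_range_succ']
  ring

lemma cardf_congr {L : ℕ} (h : ∀ k, k < L → (P k ↔ Q k)) : cardf L P = cardf L Q := by
  unfold cardf
  congr 1
  apply Finset.filter_congr
  intro k hk
  simp only [Finset.mem_range] at hk
  simp [h k hk]

/-- vertex-cover style bound -/
lemma coverA : ∀ (L : ℕ) (P : ℕ → Prop) [DecidablePred P],
    (∀ k, k + 2 ≤ L → P k ∨ P (k+1)) → L/2 ≤ cardf L P := by
  intro L
  induction L using Nat.strong_induction_on with
  | _ L ih =>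
    match L with
    | 0 => intro P _ _; simp
    | 1 => intro P _ _; simp
    | (l+2) =>
      intro P _ hcov
      rw [cardf_shift, cardf_shift]
      have h1 := ih l (by omega) (fun k => P (k+2)) (fun k hk => hcov (k+2) (by omega))
      have h2 : (1:ℕ) ≤ (if P 0 then 1 else 0) + (if P 1 then 1 else 0) := by
        rcases hcov 0 (by omega) with h | h <;> simp [h]
      have h3 : cardf l (fun k => P (k+1+1)) = cardf l (fun k => P (k+2)) := by
        apply cardf_congr; intro k _; norm_num
      have h4 : (if P (0+1) then 1 else 0) = (if P 1 then 1 else 0) := by norm_num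
      omega

lemma coverB2 (L : ℕ) (hcov : ∀ k, k + 2 ≤ L + 1 → P k ∨ P (k+1)) (hP : P L) :
    (L+2)/2 ≤ cardf (L+1) P := by
  rw [cardf_succ]
  have := coverA L P (fun k hk => hcov k (by omega))
  simp only [hP, if_true]
  omega

lemma coverB1 (L : ℕ) (hcov : ∀ k, k + 2 ≤ L + 1 → P k ∨ P (k+1)) (hP : P 0) :
    (L+2)/2 ≤ cardf (L+1) P := by
  rw [cardf_shift]
  have := coverA L (fun k => P (k+1)) (fun k hk => hcov (k+1) (by omega))
  simp only [hP, if_true]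
  omega

lemma coverC (L : ℕ) (hcov : ∀ k, k + 2 ≤ L + 2 → P k ∨ P (k+1)) (hP0 : P 0) (hPL : P (L+1)) :
    (L+2)/2 + 1 ≤ cardf (L+2) P := by
  rw [cardf_shift]
  have := coverB2 (P := fun k => P (k+1)) L (fun k hk => hcov (k+1) (by omega)) hPL
  simp only [hP0, if_true]
  omega

lemma cnt_even (L : ℕ) : cardf L (fun k => k % 2 = 0) = (L+1)/2 := by
  induction L with
  | zero => simp [cardf]
  | succ L ih =>
    rw [cardf_succ, ih]
    by_cases h : L % 2 = 0 <;> simp only [h, if_true, if_false] <;> omega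

lemma cnt_odd (L : ℕ) : cardf L (fun k => k % 2 = 1) = L/2 := by
  induction L with
  | zero => simp [cardf]
  | succ L ih =>
    rw [cardf_succ, ih]
    by_cases h : L % 2 = 1 <;> simp only [h, if_true, if_false] <;> omega

lemma cnt_or_last (l : ℕ) (hQ : ∀ k, Q k ↔ (k % 2 = 0 ∨ k + 1 = l + 1)) :
    cardf (l+1) Q = (l+1)/2 + 1 := by
  rw [cardf_succ]
  have h1 : cardf l Q = cardf l (fun k => k % 2 = 0) :=
    cardf_congr (fun k hk => by rw [hQ]; omega)
  have h2 : Q l := by rw [hQ]; omega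
  rw [h1, cnt_even]
  simp only [h2, if_true]

lemma cnt_odd_or_last (l : ℕ) (hQ : ∀ k, Q k ↔ (k % 2 = 1 ∨ k + 1 = l + 1)) :
    cardf (l+1) Q = l/2 + 1 := by
  rw [cardf_succ]
  have h1 : cardf l Q = cardf l (fun k => k % 2 = 1) :=
    cardf_congr (fun k hk => by rw [hQ]; omega)
  have h2 : Q l := by rw [hQ]; omega
  rw [h1, cnt_odd]
  simp only [h2, if_true]
open Finset


lemma chain_lt (m p q c k : ℕ) (hq : q < m) (hc : c < m) :
    c + k*m < m*p + q ↔ (k < p ∨ (k = p ∧ c < q)) := by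
  have hmp : m*p = p*m := Nat.mul_comm m p
  rcases lt_trichotomy k p with h | h | h
  · have h1 : k*m + m ≤ p*m := by
      have := Nat.mul_le_mul_right m (show k+1 ≤ p by omega)
      rw [Nat.succ_mul] at this
      omega
    constructor
    · intro _; exact Or.inl h
    · intro _; omega
  · subst h
    constructor
    · intro h2; right; exact ⟨rfl, by omega⟩
    · rintro (h2 | ⟨-, h2⟩); · omega
      omega
  · have h1 : p*m + m ≤ k*m := by
      have := Nat.mul_le_mul_right m (show p+1 ≤ k by omega)
      rw [Nat.succ_mul] at this
      omega
    constructor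
    · intro h2; omega
    · intro h2; omega

lemma fiber_card (m p q : ℕ) (hm : 0 < m) (hq : q < m) (T : Finset ℕ)
    (hT : ∀ y ∈ T, y < m*p + q) {c : ℕ} (hc : c < m) :
    (T.filter (fun y => y % m = c)).card
      = cardf (if c < q then p+1 else p) (fun k => c + k*m ∈ T) := by
  unfold cardf
  apply Finset.card_bij' (fun y _ => y / m) (fun k _ => c + k*m)
  · intro y hy
    simp only [Finset.mem_filter] at hy ⊢
    obtain ⟨hyT, hym⟩ := hy
    have hdec : c + (y / m) * m = y := by
      have h2 := Nat.mod_add_div y m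
      have h3 : m * (y/m) = (y/m) * m := Nat.mul_comm _ _
      rw [hym] at h2
      omega
    constructor
    · simp only [Finset.mem_range]
      have hlt : c + (y/m)*m < m*p + q := by rw [hdec]; exact hT y hyT
      rw [chain_lt m p q c _ hq hc] at hlt
      split <;> omega
    · rw [hdec]; exact hyT
  · intro k hk
    simp only [Finset.mem_range, Finset.mem_filter] at hk ⊢
    refine ⟨hk.2, ?_⟩
    rw [Nat.add_mul_mod_self_right]
    exact Nat.mod_eq_of_lt hc
  · intro y hy
    simp only [Finset.mem_filter] at hy
    have h2 := Nat.mod_add_div y m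
    have h3 : m * (y/m) = (y/m) * m := Nat.mul_comm _ _
    rw [hy.2] at h2
    omega
  · intro k hk
    rw [Nat.add_mul_div_right _ _ hm, Nat.div_eq_of_lt hc]
    omega

lemma total_card {m : ℕ} (hm : 0 < m) (T : Finset ℕ) :
    T.card = ∑ c ∈ range m, (T.filter (fun y => y % m = c)).card :=
  Finset.card_eq_sum_card_fiberwise (fun y _ => Finset.mem_range.2 (Nat.mod_lt y hm))

open Finset

lemma lower_odd (r u q : ℕ) (hr : 1 ≤ r) (hq1 : 1 ≤ q) (hq2 : q ≤ r + 1) (T : Finset ℕ)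
    (hTn : ∀ y ∈ T, y < (2*r+1)*(2*u+1) + q)
    (S1 : ∀ c, r+1 ≤ c → c ≤ 2*r → c ∈ T)
    (S2 : ∀ c, q ≤ c → c < q + r → c + (2*u)*(2*r+1) ∈ T)
    (S3 : ∀ a, a + (2*r+1) < (2*r+1)*(2*u+1) + q → a ∈ T ∨ a + (2*r+1) ∈ T) :
    (2*r+1)*(u+1) ≤ T.card := by
  have hm0 : 0 < 2*r+1 := by omega
  have hqm : q < 2*r+1 := by omega
  rw [total_card hm0 T]
  have hbound : ∀ c ∈ range (2*r+1), u + 1 ≤ (T.filter (fun y => y % (2*r+1) = c)).card := by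
    intro c hc
    rw [Finset.mem_range] at hc
    rw [fiber_card (2*r+1) (2*u+1) q hm0 hqm T hTn hc]
    have hcov : ∀ k, k + 2 ≤ (if c < q then 2*u+1+1 else 2*u+1) →
        ((c + k*(2*r+1) ∈ T) ∨ (c + (k+1)*(2*r+1) ∈ T)) := by
      intro k hk
      have hlt : c + (k+1)*(2*r+1) < (2*r+1)*(2*u+1) + q := by
        rw [chain_lt (2*r+1) (2*u+1) q c (k+1) hqm hc]
        split at hk <;> omega
      have he : c + k*(2*r+1) + (2*r+1) = c + (k+1)*(2*r+1) := by ring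
      have h3 := S3 (c + k*(2*r+1)) (by omega)
      rcases h3 with h | h
      · exact Or.inl h
      · right; rwa [he] at h
    split_ifs with hcq
    · have h := coverA (2*u+1+1) (fun k => c + k*(2*r+1) ∈ T) (by simpa [hcq] using hcov)
      omega
    · rcases Nat.lt_or_ge c (q + r) with hc2 | hc2
      · have hforced : (fun k => c + k*(2*r+1) ∈ T) (2*u) := S2 c (by omega) hc2
        have h := coverB2 (P := fun k => c + k*(2*r+1) ∈ T) (2*u)
          (by simpa [hcq] using hcov) hforced
        omega
      · have hforced : (fun k => c + k*(2*r+1) ∈ T) 0 := by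
          have := S1 c (by omega) (by omega)
          simpa using this
        have h := coverB1 (P := fun k => c + k*(2*r+1) ∈ T) (2*u)
          (by simpa [hcq] using hcov) hforced
        omega
  calc (2*r+1)*(u+1) = ∑ _c ∈ range (2*r+1), (u+1) := by
        rw [Finset.sum_const, Finset.card_range]; ring
    _ ≤ _ := Finset.sum_le_sum hbound

lemma lower_even (r u q : ℕ) (hr : 1 ≤ r) (hu : 1 ≤ u) (hq1 : 1 ≤ q) (hq2 : q ≤ r + 1)
    (T : Finset ℕ)
    (hTn : ∀ y ∈ T, y < (2*r+1)*(2*u) + q)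
    (S1 : ∀ c, r+1 ≤ c → c ≤ 2*r → c ∈ T)
    (S2 : ∀ c, q ≤ c → c < q + r → c + (2*u-1)*(2*r+1) ∈ T)
    (S3 : ∀ a, a + (2*r+1) < (2*r+1)*(2*u) + q → a ∈ T ∨ a + (2*r+1) ∈ T)
    (dom0 : ∃ d ∈ T, d ≤ r) :
    (2*r+1)*u + q ≤ T.card := by
  have hm0 : 0 < 2*r+1 := by omega
  have hqm : q < 2*r+1 := by omega
  obtain ⟨u', rfl⟩ : ∃ u', u = u' + 1 := ⟨u - 1, by omega⟩
  have hcov : ∀ c, c < 2*r+1 → ∀ k, k + 2 ≤ (if c < q then 2*(u'+1)+1 else 2*(u'+1)) →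
      ((c + k*(2*r+1) ∈ T) ∨ (c + (k+1)*(2*r+1) ∈ T)) := by
    intro c hc k hk
    have hlt : c + (k+1)*(2*r+1) < (2*r+1)*(2*(u'+1)) + q := by
      rw [chain_lt (2*r+1) (2*(u'+1)) q c (k+1) hqm hc]
      split at hk <;> omega
    have he : c + k*(2*r+1) + (2*r+1) = c + (k+1)*(2*r+1) := by ring
    have h3 := S3 (c + k*(2*r+1)) (by omega)
    rcases h3 with h | h
    · exact Or.inl h
    · right; rwa [he] at h
  have hfib : ∀ c, c < 2*r+1 → (T.filter (fun y => y % (2*r+1) = c)).card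
      = cardf (if c < q then 2*(u'+1)+1 else 2*(u'+1)) (fun k => c + k*(2*r+1) ∈ T) := by
    intro c hc
    exact fiber_card (2*r+1) (2*(u'+1)) q hm0 hqm T hTn hc
  -- a chain whose index-0 element is in T has count > minimum
  have hzero : ∀ c, c ≤ r → c ∈ T →
      u' + 2 ≤ cardf (if c < q then 2*(u'+1)+1 else 2*(u'+1)) (fun k => c + k*(2*r+1) ∈ T) := by
    intro c hcr hcT
    have hc : c < 2*r+1 := by omega
    have h0 : (fun k => c + k*(2*r+1) ∈ T) 0 := by simpa using hcT
    split_ifs with hcq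
    · have h := coverB1 (P := fun k => c + k*(2*r+1) ∈ T) (2*(u'+1))
        (by have := hcov c hc; simp only [if_pos hcq] at this; exact this) h0
      omega
    · -- q ≤ c ≤ r : last index 2u-1 = 2u'+1 forced
      have hL : (fun k => c + k*(2*r+1) ∈ T) (2*u'+1) := by
        have := S2 c (by omega) (by omega)
        have he : 2*(u'+1) - 1 = 2*u'+1 := by omega
        rwa [he] at this
      have h := coverC (P := fun k => c + k*(2*r+1) ∈ T) (2*u')
        (by have := hcov c hc; simp only [if_neg hcq] at this
            intro k hk; exact this k (by omega)) h0 hL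
      rw [show 2*(u'+1) = 2*u'+2 from by ring]
      omega
  -- minimum per chain
  have hmin : ∀ c ∈ range (2*r+1),
      (if r+1 ≤ c ∧ c < q + r then u'+2 else u'+1) ≤ (T.filter (fun y => y % (2*r+1) = c)).card := by
    intro c hc
    rw [Finset.mem_range] at hc
    rw [hfib c hc]
    by_cases h1 : r+1 ≤ c ∧ c < q + r
    · rw [if_pos h1]
      have hcq : ¬ (c < q) := by omega
      rw [if_neg hcq]
      have h0 : (fun k => c + k*(2*r+1) ∈ T) 0 := by
        simpa using S1 c h1.1 (by omega)
      have hL : (fun k => c + k*(2*r+1) ∈ T) (2*u'+1) := by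
        have := S2 c (by omega) h1.2
        have he : 2*(u'+1) - 1 = 2*u'+1 := by omega
        rwa [he] at this
      have h := coverC (P := fun k => c + k*(2*r+1) ∈ T) (2*u')
        (by have := hcov c hc; simp only [if_neg hcq] at this
            intro k hk; exact this k (by omega)) h0 hL
      rw [show 2*(u'+1) = 2*u'+2 from by ring]
      omega
    · rw [if_neg h1]
      by_cases h2 : c < q
      · rw [if_pos h2]
        have h := coverA (2*(u'+1)+1) (fun k => c + k*(2*r+1) ∈ T)
          (by have := hcov c hc; simp only [if_pos h2] at this; exact this)
        omega
      · rw [if_neg h2]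
        have h := coverA (2*(u'+1)) (fun k => c + k*(2*r+1) ∈ T)
          (by have := hcov c hc; simp only [if_neg h2] at this; exact this)
        omega
  have hsum_min : ∑ c ∈ range (2*r+1), (if r+1 ≤ c ∧ c < q + r then u'+2 else u'+1)
      = (2*r+1) * (u'+1) + (q-1) := by
    have hcongr : ∀ c ∈ range (2*r+1), (if r+1 ≤ c ∧ c < q + r then u'+2 else u'+1)
        = (u'+1) + (if r+1 ≤ c ∧ c < q + r then 1 else 0) := by
      intro c _; split_ifs <;> omega
    rw [Finset.sum_congr rfl hcongr, Finset.sum_add_distrib, Finset.sum_const, Finset.card_range,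
        Finset.sum_boole]
    have h1 : (range (2*r+1)).filter (fun c => r+1 ≤ c ∧ c < q + r) = Finset.Ico (r+1) (q+r) := by
      ext c
      simp only [Finset.mem_filter, Finset.mem_range, Finset.mem_Ico]
      omega
    rw [smul_eq_mul, h1]
    simp only [Nat.card_Ico, Nat.cast_id]
    omega
  obtain ⟨d, hdT, hdr⟩ := dom0
  have hd : d ∈ range (2*r+1) := Finset.mem_range.2 (by omega)
  have hmin2 : ∀ c ∈ range (2*r+1),
      ((if r+1 ≤ c ∧ c < q + r then u'+2 else u'+1) + (if c = d then 1 else 0))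
        ≤ (T.filter (fun y => y % (2*r+1) = c)).card := by
    intro c hc
    by_cases hcd : c = d
    · subst hcd
      have h := hzero c hdr hdT
      rw [Finset.mem_range] at hc
      rw [hfib c hc]
      have hnc : ¬ (r+1 ≤ c ∧ c < q + r) := by omega
      rw [if_pos rfl, if_neg hnc]
      omega
    · rw [if_neg hcd]
      have := hmin c hc
      omega
  have hge := Finset.sum_le_sum hmin2
  rw [Finset.sum_add_distrib, hsum_min, Finset.sum_ite_eq' (range (2*r+1)) d (fun _ => 1),
      if_pos hd] at hge
  rw [total_card hm0 T]
  omega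

open Finset

def pat_ev (r p q c k : ℕ) : Prop :=
  (c = 0 ∧ k % 2 = 0) ∨ (1 ≤ c ∧ c ≤ r ∧ k % 2 = 1) ∨
  (r+1 ≤ c ∧ c < q+r ∧ (k % 2 = 0 ∨ k+1 = p)) ∨ (q+r ≤ c ∧ k % 2 = 0)

instance (r p q c k : ℕ) : Decidable (pat_ev r p q c k) := by unfold pat_ev; infer_instance

def Tev (r p q : ℕ) : Finset ℕ :=
  (range ((2*r+1)*p+q)).filter (fun y => pat_ev r p q (y % (2*r+1)) (y / (2*r+1)))

lemma mem_Tev {r p q : ℕ} (y : ℕ) :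
    y ∈ Tev r p q ↔ y < (2*r+1)*p+q ∧ pat_ev r p q (y % (2*r+1)) (y / (2*r+1)) := by
  simp [Tev]

lemma mem_Tev' {r p q c : ℕ} (k : ℕ) (hc : c < 2*r+1) :
    c + k*(2*r+1) ∈ Tev r p q ↔ c + k*(2*r+1) < (2*r+1)*p+q ∧ pat_ev r p q c k := by
  rw [mem_Tev]
  rw [Nat.add_mul_mod_self_right, Nat.mod_eq_of_lt hc,
    Nat.add_mul_div_right _ _ (show 0 < 2*r+1 by omega), Nat.div_eq_of_lt hc]
  norm_num

lemma Tev_subset {r p q : ℕ} : ∀ y ∈ Tev r p q, y < (2*r+1)*p+q := by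
  intro y hy; exact ((mem_Tev y).1 hy).1

lemma Tev_S1 {r u q : ℕ} (hr : 1 ≤ r) (hu : 1 ≤ u) (hq1 : 1 ≤ q) (hq2 : q ≤ r+1) :
    ∀ c, r+1 ≤ c → c ≤ 2*r → c ∈ Tev r (2*u) q := by
  intro c h1 h2
  have : c + 0*(2*r+1) = c := by ring
  rw [← this, mem_Tev' 0 (by omega)]
  constructor
  · have h3 : (2*r+1)*1 ≤ (2*r+1)*(2*u) := Nat.mul_le_mul_left _ (by omega)
    omega
  · unfold pat_ev
    rcases Nat.lt_or_ge c (q+r) with h | h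
    · right; right; left; exact ⟨h1, h, Or.inl rfl⟩
    · right; right; right; exact ⟨h, rfl⟩

lemma Tev_S2 {r u q : ℕ} (hr : 1 ≤ r) (hu : 1 ≤ u) (hq1 : 1 ≤ q) (hq2 : q ≤ r+1) :
    ∀ c, q ≤ c → c < q + r → c + (2*u-1)*(2*r+1) ∈ Tev r (2*u) q := by
  intro c h1 h2
  have hc : c < 2*r+1 := by omega
  rw [mem_Tev' _ hc]
  constructor
  · rw [chain_lt (2*r+1) (2*u) q c _ (by omega) hc]
    left; omega
  · unfold pat_ev
    have hk : (2*u-1) % 2 = 1 := by omega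
    rcases Nat.lt_or_ge c (r+1) with h | h
    · right; left; exact ⟨by omega, by omega, hk⟩
    · right; right; left; exact ⟨h, h2, Or.inr (by omega)⟩

lemma Tev_S3 {r u q : ℕ} (hr : 1 ≤ r) (hu : 1 ≤ u) (hq1 : 1 ≤ q) (hq2 : q ≤ r+1) :
    ∀ a, a + (2*r+1) < (2*r+1)*(2*u) + q → a ∈ Tev r (2*u) q ∨ a + (2*r+1) ∈ Tev r (2*u) q := by
  intro a ha
  set c := a % (2*r+1) with hc
  set k := a / (2*r+1) with hk
  have hc1 : c < 2*r+1 := Nat.mod_lt _ (by omega)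
  have hdec : c + k*(2*r+1) = a := Nat.mod_add_div' a (2*r+1)
  have hdec2 : c + (k+1)*(2*r+1) = a + (2*r+1) := by rw [← hdec]; ring
  have hmema := mem_Tev' (r := r) (p := 2*u) (q := q) (c := c) k hc1
  have hmemb := mem_Tev' (r := r) (p := 2*u) (q := q) (c := c) (k+1) hc1
  rw [hdec] at hmema
  rw [hdec2] at hmemb
  rcases Nat.lt_or_ge c 1 with h0 | h0
  · -- c = 0 : even k or k+1
    rcases Nat.even_or_odd k with he | he
    · left; rw [hmema]; exact ⟨by omega, Or.inl ⟨by omega, by rw [Nat.even_iff] at he; omega⟩⟩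
    · right; rw [hmemb]; exact ⟨by omega, Or.inl ⟨by omega, by rw [Nat.odd_iff] at he; omega⟩⟩
  · rcases Nat.lt_or_ge c (r+1) with h1 | h1
    · -- 1 ≤ c ≤ r : odd k or k+1
      rcases Nat.even_or_odd k with he | he
      · right; rw [hmemb]
        exact ⟨by omega, Or.inr (Or.inl ⟨by omega, by omega, by rw [Nat.even_iff] at he; omega⟩)⟩
      · left; rw [hmema]
        exact ⟨by omega, Or.inr (Or.inl ⟨by omega, by omega, by rw [Nat.odd_iff] at he; omega⟩)⟩
    · rcases Nat.lt_or_ge c (q+r) with h2 | h2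
      · rcases Nat.even_or_odd k with he | he
        · left; rw [hmema]
          exact ⟨by omega, Or.inr (Or.inr (Or.inl ⟨h1, h2, Or.inl (by rw [Nat.even_iff] at he; omega)⟩))⟩
        · right; rw [hmemb]
          exact ⟨by omega, Or.inr (Or.inr (Or.inl ⟨h1, h2, Or.inl (by rw [Nat.odd_iff] at he; omega)⟩))⟩
      · rcases Nat.even_or_odd k with he | he
        · left; rw [hmema]
          exact ⟨by omega, Or.inr (Or.inr (Or.inr ⟨h2, by rw [Nat.even_iff] at he; omega⟩))⟩
        · right; rw [hmemb]
          exact ⟨by omega, Or.inr (Or.inr (Or.inr ⟨h2, by rw [Nat.odd_iff] at he; omega⟩))⟩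

lemma Tev_dom {r u q : ℕ} (hr : 1 ≤ r) (hu : 1 ≤ u) (hq1 : 1 ≤ q) (hq2 : q ≤ r+1) :
    ∀ x, x < (2*r+1)*(2*u) + q → ∃ d ∈ Tev r (2*u) q, d ≤ x + r ∧ x ≤ d + r := by
  intro x hx
  have hn1 : (2*r+1)*1 ≤ (2*r+1)*(2*u) := Nat.mul_le_mul_left _ (by omega)
  rcases Nat.lt_or_ge x (r+1) with h1 | h1
  · -- left end : witness 0
    refine ⟨0, ?_, by omega, by omega⟩
    have : (0:ℕ) + 0*(2*r+1) = 0 := by ring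
    rw [← this, mem_Tev' 0 (by omega)]
    exact ⟨by omega, Or.inl ⟨rfl, rfl⟩⟩
  · rcases Nat.lt_or_ge (x + r) ((2*r+1)*(2*u) + q) with h2 | h2
    · -- middle : window [x-r, x+r] of length 2r+1 inside range
      set a := x - r with ha
      set k := a / (2*r+1) with hk
      set t := a % (2*r+1) with ht
      have ht1 : t < 2*r+1 := Nat.mod_lt _ (by omega)
      have hdec : t + k*(2*r+1) = a := Nat.mod_add_div' a (2*r+1)
      rcases Nat.even_or_odd k with he | he
      · -- k even : witness k*(2r+1) + 2r
        have he' : k % 2 = 0 := by rwa [Nat.even_iff] at he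
        refine ⟨2*r + k*(2*r+1), ?_, by omega, by omega⟩
        rw [mem_Tev' k (by omega)]
        constructor
        · omega
        · unfold pat_ev
          rcases Nat.lt_or_ge (2*r) (q+r) with h3 | h3
          · right; right; left; exact ⟨by omega, h3, Or.inl he'⟩
          · right; right; right; exact ⟨h3, he'⟩
      · -- k odd
        have he' : k % 2 = 1 := by rwa [Nat.odd_iff] at he
        rcases Nat.eq_zero_or_pos t with ht0 | ht0
        · -- t = 0 : witness a + 1  (chain 1, index k odd)
          refine ⟨1 + k*(2*r+1), ?_, by omega, by omega⟩
          rw [mem_Tev' k (by omega)]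
          exact ⟨by omega, Or.inr (Or.inl ⟨le_refl 1, by omega, he'⟩)⟩
        · -- t ≥ 1 : witness (k+1)*(2r+1)
          have hstep : (k+1)*(2*r+1) = k*(2*r+1) + (2*r+1) := by ring
          refine ⟨0 + (k+1)*(2*r+1), ?_, by omega, by omega⟩
          rw [mem_Tev' (k+1) (by omega)]
          exact ⟨by omega, Or.inl ⟨rfl, by omega⟩⟩
    · -- right end : witness (2r+1)*(2u)
      have hcomm : (2*u)*(2*r+1) = (2*r+1)*(2*u) := Nat.mul_comm _ _
      refine ⟨0 + (2*u)*(2*r+1), ?_, by omega, by omega⟩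
      rw [mem_Tev' (2*u) (by omega)]
      exact ⟨by omega, Or.inl ⟨rfl, by omega⟩⟩

lemma Tev_card {r u q : ℕ} (hr : 1 ≤ r) (hu : 1 ≤ u) (hq1 : 1 ≤ q) (hq2 : q ≤ r+1) :
    (Tev r (2*u) q).card = (2*r+1)*u + q := by
  have hm0 : 0 < 2*r+1 := by omega
  have hqm : q < 2*r+1 := by omega
  rw [total_card hm0]
  have hfib : ∀ c ∈ range (2*r+1), ((Tev r (2*u) q).filter (fun y => y % (2*r+1) = c)).card
      = u + (if c = 0 ∨ (r+1 ≤ c ∧ c < q+r) then 1 else 0) := by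
    intro c hc
    rw [Finset.mem_range] at hc
    rw [fiber_card (2*r+1) (2*u) q hm0 hqm _ Tev_subset hc]
    have hmem : ∀ k, k < (if c < q then 2*u+1 else 2*u) →
        ((c + k*(2*r+1) ∈ Tev r (2*u) q) ↔ pat_ev r (2*u) q c k) := by
      intro k hk
      rw [mem_Tev' k hc]
      have hlt : c + k*(2*r+1) < (2*r+1)*(2*u)+q := by
        rw [chain_lt (2*r+1) (2*u) q c k hqm hc]
        split at hk <;> omega
      simp [hlt]
    rcases Nat.eq_zero_or_pos c with hc0 | hc0
    · subst hc0
      have hcq : (0:ℕ) < q := hq1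
      rw [if_pos (Or.inl rfl), if_pos hcq]
      rw [cardf_congr (Q := fun k => k % 2 = 0) (fun k hk => by
        rw [hmem k (by rw [if_pos hcq] at *; omega)]
        unfold pat_ev
        constructor
        · rintro (⟨-, h⟩ | ⟨h, -, -⟩ | ⟨h, -, -⟩ | ⟨h, -⟩) <;> omega
        · intro h; exact Or.inl ⟨rfl, h⟩)]
      rw [cnt_even]
      omega
    · rcases Nat.lt_or_ge c (r+1) with hcr | hcr
      · -- 1 ≤ c ≤ r : odd pattern, count u
        have hite : (if c = 0 ∨ (r+1 ≤ c ∧ c < q + r) then 1 else 0) = 0 := if_neg (by omega)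
        rw [hite]
        rw [cardf_congr (Q := fun k => k % 2 = 1) (fun k hk => by
          rw [hmem k hk]
          unfold pat_ev
          constructor
          · rintro (⟨h, -⟩ | ⟨-, -, h⟩ | ⟨h, -, -⟩ | ⟨h, -⟩) <;> omega
          · intro h; exact Or.inr (Or.inl ⟨by omega, by omega, h⟩))]
        split_ifs <;> rw [cnt_odd] <;> omega
      · rcases Nat.lt_or_ge c (q+r) with hcq2 | hcq2
        · -- r+1 ≤ c < q+r : even-or-last pattern, count u+1
          have hite : (if c = 0 ∨ (r+1 ≤ c ∧ c < q + r) then 1 else 0) = 1 :=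
            if_pos (Or.inr ⟨hcr, hcq2⟩)
          have hL : (if c < q then 2*u+1 else 2*u) = 2*u := if_neg (by omega)
          rw [hite, hL]
          rw [cardf_congr (Q := fun k => k % 2 = 0 ∨ k+1 = 2*u) (fun k hk => by
            rw [hmem k (by rw [hL]; omega)]
            unfold pat_ev
            constructor
            · rintro (⟨h, -⟩ | ⟨-, h, -⟩ | ⟨-, -, h⟩ | ⟨h, -⟩) <;> omega
            · intro h; exact Or.inr (Or.inr (Or.inl ⟨hcr, hcq2, h⟩)))]
          have hcnt := cnt_or_last (2*u-1) (Q := fun k => k % 2 = 0 ∨ k+1 = 2*u)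
            (fun k => by omega)
          rw [show (2*u-1)+1 = 2*u from by omega] at hcnt
          rw [hcnt]
          omega
        · -- q+r ≤ c : even pattern, count u
          have hite : (if c = 0 ∨ (r+1 ≤ c ∧ c < q + r) then 1 else 0) = 0 := if_neg (by omega)
          have hL : (if c < q then 2*u+1 else 2*u) = 2*u := if_neg (by omega)
          rw [hite, hL]
          rw [cardf_congr (Q := fun k => k % 2 = 0) (fun k hk => by
            rw [hmem k (by rw [hL]; omega)]
            unfold pat_ev
            constructor
            · rintro (⟨h, -⟩ | ⟨-, h, -⟩ | ⟨-, h, -⟩ | ⟨-, h⟩) <;> omega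
            · intro h; exact Or.inr (Or.inr (Or.inr ⟨hcq2, h⟩)))]
          rw [cnt_even]
          omega
  rw [Finset.sum_congr rfl hfib, Finset.sum_add_distrib, Finset.sum_const, Finset.card_range,
    Finset.sum_boole]
  have h1 : (range (2*r+1)).filter (fun c => c = 0 ∨ (r+1 ≤ c ∧ c < q + r))
      = insert 0 (Finset.Ico (r+1) (q+r)) := by
    ext c
    simp only [Finset.mem_filter, Finset.mem_range, Finset.mem_insert, Finset.mem_Ico]
    omega
  rw [h1, Finset.card_insert_of_notMem (by simp), Nat.card_Ico, smul_eq_mul, Nat.cast_id]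
  have : (2*r+1)*u = u*(2*r+1) := Nat.mul_comm _ _
  omega

def pat_od (r p q c k : ℕ) : Prop :=
  (c ≠ min q r ∧ k % 2 = 0) ∨ (c = min q r ∧ (k % 2 = 1 ∨ (q ≤ r ∧ k+1 = p)))

instance (r p q c k : ℕ) : Decidable (pat_od r p q c k) := by unfold pat_od; infer_instance

def Tod (r p q : ℕ) : Finset ℕ :=
  (range ((2*r+1)*p+q)).filter (fun y => pat_od r p q (y % (2*r+1)) (y / (2*r+1)))

lemma mem_Tod {r p q : ℕ} (y : ℕ) :
    y ∈ Tod r p q ↔ y < (2*r+1)*p+q ∧ pat_od r p q (y % (2*r+1)) (y / (2*r+1)) := by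
  simp [Tod]

lemma mem_Tod' {r p q c : ℕ} (k : ℕ) (hc : c < 2*r+1) :
    c + k*(2*r+1) ∈ Tod r p q ↔ c + k*(2*r+1) < (2*r+1)*p+q ∧ pat_od r p q c k := by
  rw [mem_Tod]
  rw [Nat.add_mul_mod_self_right, Nat.mod_eq_of_lt hc,
    Nat.add_mul_div_right _ _ (show 0 < 2*r+1 by omega), Nat.div_eq_of_lt hc]
  norm_num

lemma Tod_subset {r p q : ℕ} : ∀ y ∈ Tod r p q, y < (2*r+1)*p+q := by
  intro y hy; exact ((mem_Tod y).1 hy).1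

lemma Tod_S1 {r u q : ℕ} (hr : 1 ≤ r) (hq1 : 1 ≤ q) (hq2 : q ≤ r+1) :
    ∀ c, r+1 ≤ c → c ≤ 2*r → c ∈ Tod r (2*u+1) q := by
  intro c h1 h2
  have hmin : min q r ≤ r := min_le_right _ _
  have hn1 : (2*r+1)*1 ≤ (2*r+1)*(2*u+1) := Nat.mul_le_mul_left _ (by omega)
  have : c + 0*(2*r+1) = c := by ring
  rw [← this, mem_Tod' 0 (by omega)]
  exact ⟨by omega, Or.inl ⟨by omega, rfl⟩⟩

lemma Tod_S2 {r u q : ℕ} (hr : 1 ≤ r) (hq1 : 1 ≤ q) (hq2 : q ≤ r+1) :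
    ∀ c, q ≤ c → c < q + r → c + (2*u)*(2*r+1) ∈ Tod r (2*u+1) q := by
  intro c h1 h2
  have hc : c < 2*r+1 := by omega
  rw [mem_Tod' _ hc]
  constructor
  · rw [chain_lt (2*r+1) (2*u+1) q c _ (by omega) hc]
    left; omega
  · by_cases hcm : c = min q r
    · right
      refine ⟨hcm, Or.inr ⟨?_, by omega⟩⟩
      have : min q r ≥ q := hcm ▸ h1
      omega
    · left; exact ⟨hcm, by omega⟩

lemma Tod_S3 {r u q : ℕ} (hr : 1 ≤ r) (hq1 : 1 ≤ q) (hq2 : q ≤ r+1) :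
    ∀ a, a + (2*r+1) < (2*r+1)*(2*u+1) + q →
      a ∈ Tod r (2*u+1) q ∨ a + (2*r+1) ∈ Tod r (2*u+1) q := by
  intro a ha
  set c := a % (2*r+1) with hcdef
  set k := a / (2*r+1) with hkdef
  have hc1 : c < 2*r+1 := Nat.mod_lt _ (by omega)
  have hdec : c + k*(2*r+1) = a := Nat.mod_add_div' a (2*r+1)
  have hdec2 : c + (k+1)*(2*r+1) = a + (2*r+1) := by rw [← hdec]; ring
  have hmema := mem_Tod' (r := r) (p := 2*u+1) (q := q) (c := c) k hc1
  have hmemb := mem_Tod' (r := r) (p := 2*u+1) (q := q) (c := c) (k+1) hc1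
  rw [hdec] at hmema
  rw [hdec2] at hmemb
  by_cases hcm : c = min q r
  · rcases Nat.even_or_odd k with he | he
    · right; rw [hmemb]
      exact ⟨by omega, Or.inr ⟨hcm, Or.inl (by rw [Nat.even_iff] at he; omega)⟩⟩
    · left; rw [hmema]
      exact ⟨by omega, Or.inr ⟨hcm, Or.inl (by rw [Nat.odd_iff] at he; omega)⟩⟩
  · rcases Nat.even_or_odd k with he | he
    · left; rw [hmema]
      exact ⟨by omega, Or.inl ⟨hcm, by rw [Nat.even_iff] at he; omega⟩⟩
    · right; rw [hmemb]
      exact ⟨by omega, Or.inl ⟨hcm, by rw [Nat.odd_iff] at he; omega⟩⟩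

lemma Tod_dom {r u q : ℕ} (hr : 1 ≤ r) (hq1 : 1 ≤ q) (hq2 : q ≤ r+1) :
    ∀ x, x < (2*r+1)*(2*u+1) + q → ∃ d ∈ Tod r (2*u+1) q, d ≤ x + r ∧ x ≤ d + r := by
  intro x hx
  have hn1 : (2*r+1)*1 ≤ (2*r+1)*(2*u+1) := Nat.mul_le_mul_left _ (by omega)
  have hminr : min q r ≤ r := min_le_right _ _
  have hminq : min q r ≤ q := min_le_left _ _
  have hmin1 : 1 ≤ min q r := le_min hq1 hr
  rcases Nat.lt_or_ge x (r+1) with h1 | h1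
  · refine ⟨0, ?_, by omega, by omega⟩
    have : (0:ℕ) + 0*(2*r+1) = 0 := by ring
    rw [← this, mem_Tod' 0 (by omega)]
    exact ⟨by omega, Or.inl ⟨by omega, rfl⟩⟩
  · rcases Nat.lt_or_ge (x + r) ((2*r+1)*(2*u+1) + q) with h2 | h2
    · set a := x - r with ha
      set k := a / (2*r+1) with hk
      set t := a % (2*r+1) with ht
      have ht1 : t < 2*r+1 := Nat.mod_lt _ (by omega)
      have hdec : t + k*(2*r+1) = a := Nat.mod_add_div' a (2*r+1)
      rcases Nat.even_or_odd k with he | he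
      · have he' : k % 2 = 0 := by rwa [Nat.even_iff] at he
        refine ⟨2*r + k*(2*r+1), ?_, by omega, by omega⟩
        rw [mem_Tod' k (by omega)]
        exact ⟨by omega, Or.inl ⟨by omega, he'⟩⟩
      · have he' : k % 2 = 1 := by rwa [Nat.odd_iff] at he
        rcases Nat.lt_or_ge (min q r) t with hts | hts
        · -- t > min q r : witness (k+1)*(2r+1)
          have hstep : (k+1)*(2*r+1) = k*(2*r+1) + (2*r+1) := by ring
          refine ⟨0 + (k+1)*(2*r+1), ?_, by omega, by omega⟩
          rw [mem_Tod' (k+1) (by omega)]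
          exact ⟨by omega, Or.inl ⟨by omega, by omega⟩⟩
        · -- t ≤ min q r : witness min q r + k*(2r+1)
          refine ⟨min q r + k*(2*r+1), ?_, by omega, by omega⟩
          rw [mem_Tod' k (by omega)]
          exact ⟨by omega, Or.inr ⟨rfl, Or.inl he'⟩⟩
    · -- right end
      rcases Nat.lt_or_ge r q with hqr | hqr
      · -- q = r+1 : witness r + (2u+1)*(2r+1) = n-1
        have hcomm : (2*u+1)*(2*r+1) = (2*r+1)*(2*u+1) := Nat.mul_comm _ _
        have hminrr : min q r = r := by omega
        refine ⟨r + (2*u+1)*(2*r+1), ?_, by omega, by omega⟩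
        rw [mem_Tod' (2*u+1) (by omega)]
        exact ⟨by omega, Or.inr ⟨by omega, Or.inl (by omega)⟩⟩
      · -- q ≤ r : witness 2r + (2u)*(2r+1) = n - q - 1
        have hcomm : (2*u)*(2*r+1) = (2*r+1)*(2*u) := Nat.mul_comm _ _
        have hexp : (2*r+1)*(2*u+1) = (2*r+1)*(2*u) + (2*r+1) := by ring
        refine ⟨2*r + (2*u)*(2*r+1), ?_, by omega, by omega⟩
        rw [mem_Tod' (2*u) (by omega)]
        exact ⟨by omega, Or.inl ⟨by omega, by omega⟩⟩

lemma Tod_card {r u q : ℕ} (hr : 1 ≤ r) (hq1 : 1 ≤ q) (hq2 : q ≤ r+1) :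
    (Tod r (2*u+1) q).card = (2*r+1)*(u+1) := by
  have hm0 : 0 < 2*r+1 := by omega
  have hqm : q < 2*r+1 := by omega
  have hminr : min q r ≤ r := min_le_right _ _
  have hminq : min q r ≤ q := min_le_left _ _
  have hmin1 : 1 ≤ min q r := le_min hq1 hr
  rw [total_card hm0]
  have hfib : ∀ c ∈ range (2*r+1), ((Tod r (2*u+1) q).filter (fun y => y % (2*r+1) = c)).card
      = u + 1 := by
    intro c hc
    rw [Finset.mem_range] at hc
    rw [fiber_card (2*r+1) (2*u+1) q hm0 hqm _ Tod_subset hc]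
    have hmem : ∀ k, k < (if c < q then 2*u+1+1 else 2*u+1) →
        ((c + k*(2*r+1) ∈ Tod r (2*u+1) q) ↔ pat_od r (2*u+1) q c k) := by
      intro k hk
      rw [mem_Tod' k hc]
      have hlt : c + k*(2*r+1) < (2*r+1)*(2*u+1)+q := by
        rw [chain_lt (2*r+1) (2*u+1) q c k hqm hc]
        split at hk <;> omega
      simp [hlt]
    by_cases hcm : c = min q r
    · rcases Nat.lt_or_ge r q with hqr | hqr
      · -- q = r+1, c = r < q : L = 2u+2, pattern = odd
        have hL : (if c < q then 2*u+1+1 else 2*u+1) = 2*u+1+1 := if_pos (by omega)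
        rw [hL]
        rw [cardf_congr (Q := fun k => k % 2 = 1) (fun k hk => by
          rw [hmem k (by rw [hL]; omega)]
          unfold pat_od
          constructor
          · rintro (⟨h, -⟩ | ⟨-, h | ⟨h, -⟩⟩) <;> omega
          · intro h; exact Or.inr ⟨hcm, Or.inl h⟩)]
        rw [cnt_odd]
        omega
      · -- q ≤ r, c = min q r = q : L = 2u+1, pattern = odd or last
        have hcq : c = q := by omega
        have hL : (if c < q then 2*u+1+1 else 2*u+1) = 2*u+1 := if_neg (by omega)
        rw [hL]
        rw [cardf_congr (Q := fun k => k % 2 = 1 ∨ k + 1 = 2*u+1) (fun k hk => by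
          rw [hmem k (by rw [hL]; omega)]
          unfold pat_od
          constructor
          · rintro (⟨h, -⟩ | ⟨-, h | ⟨-, h⟩⟩) <;> omega
          · rintro (h | h)
            · exact Or.inr ⟨hcm, Or.inl h⟩
            · exact Or.inr ⟨hcm, Or.inr ⟨hqr, h⟩⟩)]
        have hcnt := cnt_odd_or_last (2*u) (Q := fun k => k % 2 = 1 ∨ k + 1 = 2*u+1)
          (fun k => by omega)
        rw [hcnt]
        omega
    · -- c ≠ min q r : even pattern, u+1 in both lengths
      rw [cardf_congr (Q := fun k => k % 2 = 0) (fun k hk => by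
        rw [hmem k hk]
        unfold pat_od
        constructor
        · rintro (⟨-, h⟩ | ⟨h, -⟩) <;> omega
        · intro h; exact Or.inl ⟨hcm, h⟩)]
      split_ifs <;> rw [cnt_even] <;> omega
  rw [Finset.sum_congr rfl hfib, Finset.sum_const, Finset.card_range, smul_eq_mul]

open Finset SimpleGraph

/-- upper bound bridge -/
lemma bridgeA (n r : ℕ) (T : Finset ℕ) (hTn : ∀ y ∈ T, y < n)
    (hdom : ∀ x, x < n → ∃ d ∈ T, d ≤ x + r ∧ x ≤ d + r)
    (hsep : ∀ j, j + 1 < n → (r ≤ j ∧ j - r ∈ T) ∨ (j + r + 1 < n ∧ j + r + 1 ∈ T)) :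
    ∃ D : Set (Fin n), IsIdCode (pathGraph n) r D ∧ D.ncard = T.card := by
  refine ⟨{i : Fin n | i.1 ∈ T}, ?_, ?_⟩
  · rw [idcode_iff]
    have himg : Fin.val '' {i : Fin n | i.1 ∈ T} = ↑T := by
      ext y
      simp only [Set.mem_image, Set.mem_setOf_eq, Finset.coe_sort_coe, Finset.mem_coe]
      constructor
      · rintro ⟨i, hi, rfl⟩; exact hi
      · intro hy; exact ⟨⟨y, hTn y hy⟩, hy, rfl⟩
    rw [himg]
    exact ⟨hdom, hsep⟩
  · rw [← Set.ncard_image_of_injective _ Fin.val_injective]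
    have himg : Fin.val '' {i : Fin n | i.1 ∈ T} = ↑T := by
      ext y
      simp only [Set.mem_image, Set.mem_setOf_eq, Finset.coe_sort_coe, Finset.mem_coe]
      constructor
      · rintro ⟨i, hi, rfl⟩; exact hi
      · intro hy; exact ⟨⟨y, hTn y hy⟩, hy, rfl⟩
    rw [himg, Set.ncard_coe_finset]

/-- lower bound bridge -/
lemma bridgeB (n r : ℕ) (D : Set (Fin n)) (h : IsIdCode (pathGraph n) r D) :
    ∃ T : Finset ℕ, T.card = D.ncard ∧ (∀ y ∈ T, y < n) ∧
      (∀ x, x < n → ∃ d ∈ T, d ≤ x + r ∧ x ≤ d + r) ∧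
      (∀ j, j + 1 < n → (r ≤ j ∧ j - r ∈ T) ∨ (j + r + 1 < n ∧ j + r + 1 ∈ T)) := by
  classical
  rw [idcode_iff] at h
  refine ⟨D.toFinset.image Fin.val, ?_, ?_, ?_, ?_⟩
  · rw [Finset.card_image_of_injective _ Fin.val_injective, Set.ncard_eq_toFinset_card' D]
  · intro y hy
    simp only [Finset.mem_image, Set.mem_toFinset] at hy
    obtain ⟨i, -, rfl⟩ := hy
    exact i.2
  · intro x hx
    obtain ⟨d, hd, h1, h2⟩ := h.1 x hx
    obtain ⟨i, hiD, rfl⟩ := hd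
    exact ⟨i.1, by simp only [Finset.mem_image, Set.mem_toFinset]; exact ⟨i, hiD, rfl⟩, h1, h2⟩
  · intro j hj
    rcases h.2 j hj with ⟨h1, hm⟩ | ⟨h1, hm⟩
    · rw [Set.mem_image] at hm
      obtain ⟨i, hiD, h2⟩ := hm
      refine Or.inl ⟨h1, ?_⟩
      rw [← h2]
      simp only [Finset.mem_image, Set.mem_toFinset]
      exact ⟨i, hiD, rfl⟩
    · rw [Set.mem_image] at hm
      obtain ⟨i, hiD, h2⟩ := hm
      refine Or.inr ⟨h1, ?_⟩
      rw [← h2]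
      simp only [Finset.mem_image, Set.mem_toFinset]
      exact ⟨i, hiD, rfl⟩

lemma sep_of_S (r p q : ℕ) (hr : 1 ≤ r) (hp : 1 ≤ p) (hq1 : 1 ≤ q) (hq2 : q ≤ r+1)
    (T : Finset ℕ)
    (S1 : ∀ c, r+1 ≤ c → c ≤ 2*r → c ∈ T)
    (S2 : ∀ c, q ≤ c → c < q + r → c + (p-1)*(2*r+1) ∈ T)
    (S3 : ∀ a, a + (2*r+1) < (2*r+1)*p + q → a ∈ T ∨ a + (2*r+1) ∈ T) :
    ∀ j, j + 1 < (2*r+1)*p + q →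
      (r ≤ j ∧ j - r ∈ T) ∨ (j + r + 1 < (2*r+1)*p + q ∧ j + r + 1 ∈ T) := by
  have hexp : (2*r+1)*p = (p-1)*(2*r+1) + (2*r+1) := by
    have h1 : (2*r+1)*p = p*(2*r+1) := Nat.mul_comm _ _
    have h2 : ((p-1)+1)*(2*r+1) = (p-1)*(2*r+1) + 1*(2*r+1) := by ring
    have h3 : (p-1)+1 = p := by omega
    rw [h3] at h2
    omega
  intro j hj
  rcases Nat.lt_or_ge j r with h1 | h1
  · exact Or.inr ⟨by omega, S1 (j+r+1) (by omega) (by omega)⟩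
  · rcases Nat.lt_or_ge (j+r+1) ((2*r+1)*p + q) with h2 | h2
    · rcases S3 (j - r) (by omega) with h3 | h3
      · exact Or.inl ⟨h1, h3⟩
      · right
        refine ⟨h2, ?_⟩
        have he : j - r + (2*r+1) = j + r + 1 := by omega
        rwa [he] at h3
    · left
      refine ⟨h1, ?_⟩
      have hc1 : q ≤ j - r - (p-1)*(2*r+1) := by omega
      have hc2 : j - r - (p-1)*(2*r+1) < q + r := by omega
      have := S2 _ hc1 hc2
      have he : j - r - (p-1)*(2*r+1) + (p-1)*(2*r+1) = j - r := by omega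
      rwa [he] at this

lemma S_of_sep (r p q : ℕ) (hr : 1 ≤ r) (hp : 1 ≤ p) (hq1 : 1 ≤ q) (hq2 : q ≤ r+1)
    (T : Finset ℕ)
    (hsep : ∀ j, j + 1 < (2*r+1)*p + q →
      (r ≤ j ∧ j - r ∈ T) ∨ (j + r + 1 < (2*r+1)*p + q ∧ j + r + 1 ∈ T)) :
    (∀ c, r+1 ≤ c → c ≤ 2*r → c ∈ T) ∧
    (∀ c, q ≤ c → c < q + r → c + (p-1)*(2*r+1) ∈ T) ∧
    (∀ a, a + (2*r+1) < (2*r+1)*p + q → a ∈ T ∨ a + (2*r+1) ∈ T) := by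
  have hexp : (2*r+1)*p = (p-1)*(2*r+1) + (2*r+1) := by
    have h1 : (2*r+1)*p = p*(2*r+1) := Nat.mul_comm _ _
    have h2 : ((p-1)+1)*(2*r+1) = (p-1)*(2*r+1) + 1*(2*r+1) := by ring
    have h3 : (p-1)+1 = p := by omega
    rw [h3] at h2
    omega
  refine ⟨?_, ?_, ?_⟩
  · intro c h1 h2
    rcases hsep (c - r - 1) (by omega) with ⟨h3, -⟩ | ⟨-, h4⟩
    · omega
    · have he : c - r - 1 + r + 1 = c := by omega
      rwa [he] at h4
  · intro c h1 h2
    rcases hsep (c + (p-1)*(2*r+1) + r) (by omega) with ⟨-, h4⟩ | ⟨h3, -⟩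
    · have he : c + (p-1)*(2*r+1) + r - r = c + (p-1)*(2*r+1) := by omega
      rwa [he] at h4
    · omega
  · intro a ha
    rcases hsep (a + r) (by omega) with ⟨-, h4⟩ | ⟨-, h4⟩
    · left
      have he : a + r - r = a := by omega
      rwa [he] at h4
    · right
      have he : a + r + r + 1 = a + (2*r+1) := by omega
      rwa [he] at h4

theorem stmt13 (r p q : ℕ) (hr : 1 ≤ r) (hp : 1 ≤ p) (hq1 : 1 ≤ q) (hq2 : q ≤ r+1) :
    (Even p → IsLeast {m | ∃ D : Set (Fin ((2*r+1)*p + q)),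
        IsIdCode (SimpleGraph.pathGraph ((2*r+1)*p + q)) r D ∧ D.ncard = m}
      ((2*r+1)*p/2 + q)) ∧
    (Odd p → IsLeast {m | ∃ D : Set (Fin ((2*r+1)*p + q)),
        IsIdCode (SimpleGraph.pathGraph ((2*r+1)*p + q)) r D ∧ D.ncard = m}
      ((2*r+1)*(p-1)/2 + 2*r + 1)) := by
  constructor
  · intro hEven
    obtain ⟨t, ht⟩ := hEven
    have hp2 : p = 2*t := by omega
    subst hp2
    have ht1 : 1 ≤ t := by omega
    have htarget : (2*r+1)*(2*t)/2 + q = (2*r+1)*t + q := by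
      rw [show (2*r+1)*(2*t) = ((2*r+1)*t)*2 from by ring,
        Nat.mul_div_cancel _ (by norm_num : (0:ℕ) < 2)]
    rw [htarget]
    constructor
    · -- membership : explicit code
      have hS2 : ∀ c, q ≤ c → c < q + r → c + (2*t-1)*(2*r+1) ∈ Tev r (2*t) q :=
        Tev_S2 hr ht1 hq1 hq2
      have hsep := sep_of_S r (2*t) q hr (by omega) hq1 hq2 (Tev r (2*t) q)
        (Tev_S1 hr ht1 hq1 hq2) hS2 (Tev_S3 hr ht1 hq1 hq2)
      obtain ⟨D, hD, hcard⟩ := bridgeA ((2*r+1)*(2*t)+q) r (Tev r (2*t) q) Tev_subset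
        (Tev_dom hr ht1 hq1 hq2) hsep
      exact ⟨D, hD, by rw [hcard, Tev_card hr ht1 hq1 hq2]⟩
    · rintro x ⟨D, hD, rfl⟩
      obtain ⟨T, hTcard, hTn, hdom, hsep⟩ := bridgeB _ r D hD
      obtain ⟨S1, S2, S3⟩ := S_of_sep r (2*t) q hr (by omega) hq1 hq2 T hsep
      have hdom0 : ∃ d ∈ T, d ≤ r := by
        have hn0 : 0 < (2*r+1)*(2*t) + q := by omega
        obtain ⟨d, hd, h1, h2⟩ := hdom 0 hn0
        exact ⟨d, hd, by omega⟩
      have hlow := lower_even r t q hr ht1 hq1 hq2 T hTn S1 S2 S3 hdom0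
      omega
  · intro hOdd
    obtain ⟨t, ht⟩ := hOdd
    subst ht
    have htarget : (2*r+1)*(2*t+1-1)/2 + 2*r + 1 = (2*r+1)*(t+1) := by
      rw [show 2*t+1-1 = 2*t from by omega, show (2*r+1)*(2*t) = ((2*r+1)*t)*2 from by ring,
        Nat.mul_div_cancel _ (by norm_num : (0:ℕ) < 2)]
      ring
    rw [htarget]
    constructor
    · have hS2 : ∀ c, q ≤ c → c < q + r → c + (2*t+1-1)*(2*r+1) ∈ Tod r (2*t+1) q := by
        simp only [Nat.add_sub_cancel]
        exact Tod_S2 hr hq1 hq2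
      have hsep := sep_of_S r (2*t+1) q hr (by omega) hq1 hq2 (Tod r (2*t+1) q)
        (Tod_S1 hr hq1 hq2) hS2 (Tod_S3 hr hq1 hq2)
      obtain ⟨D, hD, hcard⟩ := bridgeA ((2*r+1)*(2*t+1)+q) r (Tod r (2*t+1) q) Tod_subset
        (Tod_dom hr hq1 hq2) hsep
      exact ⟨D, hD, by rw [hcard, Tod_card hr hq1 hq2]⟩
    · rintro x ⟨D, hD, rfl⟩
      obtain ⟨T, hTcard, hTn, hdom, hsep⟩ := bridgeB _ r D hD
      obtain ⟨S1, S2, S3⟩ := S_of_sep r (2*t+1) q hr (by omega) hq1 hq2 T hsep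
      simp only [Nat.add_sub_cancel] at S2
      have hlow := lower_odd r t q hr hq1 hq2 T hTn S1 S2 S3
      omega
end

section
/- Let r ≥ 1 and let D be an r-locating-dominating set of the cycle C_n. Then every vertex x ∈ D r-separates at most two pairs of consecutive vertices of C_n, and r-separates at most two pairs of D-consecutive vertices. -/
/-- `x` `r`-separates the pair `{u, v}`: `x ∈ D_r(u) △ D_r(v)`. -/
def RSep {V : Type*} (G : SimpleGraph V) (r : ℕ) (D : Set V) (x u v : V) : Prop :=
  (x ∈ Dr G r D u ∧ x ∉ Dr G r D v) ∨ (x ∉ Dr G r D u ∧ x ∈ Dr G r D v)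

/-- `u` and `v` are `D`-consecutive on the cycle `C_n`. -/
def DConsec (n : ℕ) (D : Set (ZMod n)) (u v : ZMod n) : Prop :=
  u ≠ v ∧ u ∉ D ∧ v ∉ D ∧
    ∃ m : ℕ, 0 < m ∧ m < n ∧ v = u + (m : ZMod n) ∧
      ∀ j : ℕ, 0 < j → j < m → u + (j : ZMod n) ∈ D

namespace S15

/-- cyclic distance measure -/
def delta (n : ℕ) (a : ZMod n) : ℕ := min a.val (n - a.val)

variable {n : ℕ}

lemma adj_succ (hn : 3 ≤ n) (x : ZMod n) : (cycleG n).Adj x (x + 1) := by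
  haveI : Fact (1 < n) := ⟨by omega⟩
  refine ⟨?_, Or.inr (by ring)⟩
  intro h
  have : (1 : ZMod n) = 0 := by
    have := h.symm
    rwa [add_eq_left] at this
  exact one_ne_zero this

lemma exists_walk (hn : 3 ≤ n) (k : ℕ) : ∀ x : ZMod n,
    ∃ w : (cycleG n).Walk x (x + (k : ZMod n)), w.length = k := by
  induction k with
  | zero =>
    intro x
    refine ⟨(SimpleGraph.Walk.nil : (cycleG n).Walk x x).copy rfl (by simp), ?_⟩
    simp
  | succ k ih =>
    intro x
    obtain ⟨w, hw⟩ := ih (x + 1)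
    have he : x + 1 + (k : ZMod n) = x + ((k + 1 : ℕ) : ZMod n) := by push_cast; ring
    refine ⟨SimpleGraph.Walk.cons (adj_succ hn x) (w.copy rfl he), ?_⟩
    simp [hw]

lemma delta_succ_le (hn : 3 ≤ n) (a : ZMod n) : delta n (a + 1) ≤ delta n a + 1 := by
  haveI : Fact (1 < n) := ⟨by omega⟩
  haveI : NeZero n := ⟨by omega⟩
  have hv : (a + 1).val = (a.val + 1) % n := by
    rw [ZMod.val_add, ZMod.val_one]
  have hlt : a.val < n := ZMod.val_lt a
  unfold delta
  rcases Nat.lt_or_ge (a.val + 1) n with h | h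
  · rw [hv, Nat.mod_eq_of_lt h]; omega
  · have : a.val + 1 = n := by omega
    rw [hv, this, Nat.mod_self]; omega

lemma delta_neg (hn : 3 ≤ n) (a : ZMod n) : delta n (-a) = delta n a := by
  haveI : NeZero n := ⟨by omega⟩
  by_cases h : a = 0
  · simp [h]
  · haveI : NeZero a := ⟨h⟩
    have := ZMod.val_neg_of_ne_zero a
    have hlt : a.val < n := ZMod.val_lt a
    unfold delta
    omega

lemma delta_pred_le (hn : 3 ≤ n) (a : ZMod n) : delta n (a - 1) ≤ delta n a + 1 := by
  have h1 : delta n (a - 1) = delta n (-a + 1) := by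
    rw [← delta_neg hn (a - 1)]; ring_nf
  rw [h1]
  calc delta n (-a + 1) ≤ delta n (-a) + 1 := delta_succ_le hn _
    _ = delta n a + 1 := by rw [delta_neg hn]

lemma delta_le_walk (hn : 3 ≤ n) {x y : ZMod n} (w : (cycleG n).Walk x y) :
    delta n (y - x) ≤ w.length := by
  induction w with
  | nil => simp [delta]
  | cons h p ih =>
    rename_i u v z
    simp only [SimpleGraph.Walk.length_cons]
    rcases h.2 with h1 | h1
    · have hz : z - u = (z - v) - 1 := by rw [← h1]; ring
      rw [hz]
      calc delta n (z - v - 1) ≤ delta n (z - v) + 1 := delta_pred_le hn _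
        _ ≤ p.length + 1 := by omega
    · have hz : z - u = (z - v) + 1 := by rw [← h1]; ring
      rw [hz]
      calc delta n (z - v + 1) ≤ delta n (z - v) + 1 := delta_succ_le hn _
        _ ≤ p.length + 1 := by omega

lemma dist_le_iff (hn : 3 ≤ n) (x y : ZMod n) (r : ℕ) :
    (cycleG n).dist x y ≤ r ↔ delta n (y - x) ≤ r := by
  haveI : NeZero n := ⟨by omega⟩
  have hvy : x + ((y - x).val : ZMod n) = y := by rw [ZMod.natCast_zmod_val]; ring
  obtain ⟨w0, hw0⟩ := exists_walk hn (y - x).val x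
  constructor
  · intro h
    have hre : (cycleG n).Reachable x y := ⟨hvy ▸ w0⟩
    obtain ⟨w, hw⟩ := hre.exists_walk_length_eq_dist
    have := delta_le_walk hn w
    omega
  · intro h
    by_cases hxy : y = x
    · subst hxy; simp [SimpleGraph.dist_self]
    unfold delta at h
    by_cases h1 : (y - x).val ≤ r
    · have := SimpleGraph.dist_le (w0.copy rfl hvy)
      rw [SimpleGraph.Walk.length_copy] at this
      omega
    · -- walk from y to x of length (x - y).val = n - (y-x).val
      obtain ⟨w1, hw1⟩ := exists_walk hn (x - y).val y
      have hvx : y + ((x - y).val : ZMod n) = x := by rw [ZMod.natCast_zmod_val]; ring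
      have hne : (y - x) ≠ 0 := sub_ne_zero.mpr hxy
      haveI : NeZero (y - x) := ⟨hne⟩
      have hval : (x - y).val = n - (y - x).val := by
        have : x - y = -(y - x) := by ring
        rw [this, ZMod.val_neg_of_ne_zero]
      have := SimpleGraph.dist_le (w1.copy rfl hvx)
      rw [SimpleGraph.Walk.length_copy, hw1] at this
      rw [SimpleGraph.dist_comm]
      omega



section G

variable (hn : 3 ≤ n) (r : ℕ) (x : ZMod n)

/-- position of `u` relative to the left end `x - r` of the ball -/
def gpos (n : ℕ) (r : ℕ) (x u : ZMod n) : ℕ := (u - x + (r : ZMod n)).val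

lemma gpos_lt [NeZero n] (u : ZMod n) : gpos n r x u < n := ZMod.val_lt _

lemma delta_le_iff_gpos (hn2 : 2 * r + 2 ≤ n) (u : ZMod n) :
    delta n (u - x) ≤ r ↔ gpos n r x u ≤ 2 * r := by
  haveI : NeZero n := ⟨by omega⟩
  set a := u - x with ha
  have hv : a.val < n := ZMod.val_lt a
  have hg : gpos n r x u = (a.val + r) % n := by
    unfold gpos
    rw [← ha, ZMod.val_add, ZMod.val_cast_of_lt (by omega : r < n)]
  unfold delta
  rcases Nat.lt_or_ge (a.val + r) n with h | h
  · rw [hg, Nat.mod_eq_of_lt h]; omega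
  · have h2 : a.val + r - n < n := by omega
    have : (a.val + r) % n = a.val + r - n := by
      conv_lhs => rw [← Nat.sub_add_cancel h]
      rw [Nat.add_mod_right, Nat.mod_eq_of_lt h2]
    rw [hg, this]; omega

lemma gpos_succ (hn : 3 ≤ n) (u : ZMod n) :
    gpos n r x (u + 1) = (gpos n r x u + 1) % n := by
  haveI : Fact (1 < n) := ⟨by omega⟩
  haveI : NeZero n := ⟨by omega⟩
  unfold gpos
  have : u + 1 - x + (r : ZMod n) = (u - x + (r : ZMod n)) + 1 := by ring
  rw [this, ZMod.val_add, ZMod.val_one]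

lemma gpos_eq (hn : 3 ≤ n) {t : ℕ} (ht : t < n) {u : ZMod n}
    (h : gpos n r x u = t) : u = x - (r : ZMod n) + (t : ZMod n) := by
  haveI : NeZero n := ⟨by omega⟩
  unfold gpos at h
  have : ((u - x + (r : ZMod n)).val : ZMod n) = (t : ZMod n) := by rw [h]
  rw [ZMod.natCast_zmod_val] at this
  have : u - x + (r : ZMod n) = (t : ZMod n) := this
  linear_combination this

end G

section Main

variable (r : ℕ) (x : ZMod n)

lemma cross_iff (hn : 3 ≤ n) (hn2 : 2 * r + 2 ≤ n) (u : ZMod n) :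
    ((delta n (u - x) ≤ r ∧ ¬ delta n (u + 1 - x) ≤ r) ∨
      (¬ delta n (u - x) ≤ r ∧ delta n (u + 1 - x) ≤ r)) ↔
    (gpos n r x u = 2 * r ∨ gpos n r x u = n - 1) := by
  haveI : NeZero n := ⟨by omega⟩
  rw [delta_le_iff_gpos r x hn2 u, delta_le_iff_gpos r x hn2 (u + 1), gpos_succ r x hn u]
  have hlt : gpos n r x u < n := gpos_lt r x u
  rcases Nat.lt_or_ge (gpos n r x u + 1) n with h | h
  · rw [Nat.mod_eq_of_lt h]; omega
  · have he : gpos n r x u + 1 = n := by omega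
    rw [he, Nat.mod_self]; omega

lemma exists_cross_step (P : ZMod n → Prop) (m : ℕ) :
    ∀ u : ZMod n, ((P u ∧ ¬ P (u + (m : ZMod n))) ∨ (¬ P u ∧ P (u + (m : ZMod n)))) →
    ∃ j : ℕ, j < m ∧
      ((P (u + (j : ZMod n)) ∧ ¬ P (u + (j : ZMod n) + 1)) ∨
        (¬ P (u + (j : ZMod n)) ∧ P (u + (j : ZMod n) + 1))) := by
  induction m with
  | zero => intro u h; simp only [Nat.cast_zero, add_zero] at h; tauto
  | succ m ih =>
    intro u h
    have hcast : u + ((m + 1 : ℕ) : ZMod n) = u + (m : ZMod n) + 1 := by push_cast; ring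
    rw [hcast] at h
    by_cases hc : (P (u + (m : ZMod n)) ↔ P (u + (m : ZMod n) + 1))
    · obtain ⟨j, hj, hcr⟩ := ih u (by tauto)
      exact ⟨j, by omega, hcr⟩
    · exact ⟨m, by omega, by tauto⟩

lemma consec_unique {D : Set (ZMod n)} {u v u' v' : ZMod n} {m m' j j' : ℕ}
    (hu : u ∉ D) (hv : v ∉ D) (hm : 0 < m) (hvv : v = u + (m : ZMod n))
    (hint : ∀ k : ℕ, 0 < k → k < m → u + (k : ZMod n) ∈ D)
    (hu' : u' ∉ D) (hv' : v' ∉ D) (hm' : 0 < m') (hvv' : v' = u' + (m' : ZMod n))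
    (hint' : ∀ k : ℕ, 0 < k → k < m' → u' + (k : ZMod n) ∈ D)
    (hj : j < m) (hj' : j' < m') (heq : u + (j : ZMod n) = u' + (j' : ZMod n)) :
    u = u' ∧ v = v' := by
  have hjj : j = j' := by
    rcases lt_trichotomy j j' with h | h | h
    · exfalso
      have : u = u' + ((j' - j : ℕ) : ZMod n) := by
        rw [Nat.cast_sub h.le]
        linear_combination heq
      rw [this] at hu
      exact hu (hint' _ (by omega) (by omega))
    · exact h
    · exfalso
      have : u' = u + ((j - j' : ℕ) : ZMod n) := by
        rw [Nat.cast_sub h.le]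
        linear_combination heq.symm
      rw [this] at hu'
      exact hu' (hint _ (by omega) (by omega))
  subst hjj
  have huu : u = u' := by
    have := heq
    exact add_right_cancel this
  subst huu
  refine ⟨rfl, ?_⟩
  rcases lt_trichotomy m m' with h | h | h
  · exfalso; rw [hvv] at hv; exact hv (hint' _ hm h)
  · rw [hvv, hvv', h]
  · exfalso; rw [hvv'] at hv'; exact hv' (hint _ hm' h)

end Main
end S15

theorem stmt15 (n r : ℕ) (hr : 1 ≤ r) (hn : 3 ≤ n) (D : Set (ZMod n))
    (hD : IsLD (cycleG n) r D) (x : ZMod n) (hx : x ∈ D) :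
    ({s : Sym2 (ZMod n) | ∃ u : ZMod n,
        s = s(u, u+1) ∧ RSep (cycleG n) r D x u (u+1)}.ncard ≤ 2) ∧
    ({s : Sym2 (ZMod n) | ∃ u v : ZMod n,
        s = s(u, v) ∧ DConsec n D u v ∧ RSep (cycleG n) r D x u v}.ncard ≤ 2) := by
  haveI : NeZero n := ⟨by omega⟩
  have hmem : ∀ u : ZMod n, x ∈ Dr (cycleG n) r D u ↔ S15.delta n (u - x) ≤ r := by
    intro u
    have h1 : x ∈ Dr (cycleG n) r D u ↔ (cycleG n).dist u x ≤ r := by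
      simp [Dr, hx]
    rw [h1, S15.dist_le_iff hn, show x - u = -(u - x) by ring, S15.delta_neg hn]
  have hsep : ∀ u v : ZMod n, RSep (cycleG n) r D x u v ↔
      ((S15.delta n (u - x) ≤ r ∧ ¬ S15.delta n (v - x) ≤ r) ∨
        (¬ S15.delta n (u - x) ≤ r ∧ S15.delta n (v - x) ≤ r)) := by
    intro u v
    unfold RSep
    rw [hmem u, hmem v]
  by_cases hsmall : n ≤ 2 * r + 1
  · have hall : ∀ u : ZMod n, S15.delta n (u - x) ≤ r := by
      intro u
      have := ZMod.val_lt (u - x)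
      unfold S15.delta
      omega
    have hno : ∀ u v : ZMod n, ¬ RSep (cycleG n) r D x u v := by
      intro u v h
      rw [hsep u v] at h
      rcases h with ⟨h1, h2⟩ | ⟨h1, h2⟩
      · exact h2 (hall v)
      · exact h1 (hall u)
    constructor
    · have : {s : Sym2 (ZMod n) | ∃ u : ZMod n,
          s = s(u, u+1) ∧ RSep (cycleG n) r D x u (u+1)} = ∅ := by
        ext s
        simp only [Set.mem_setOf_eq, Set.mem_empty_iff_false, iff_false]
        rintro ⟨u, _, h⟩
        exact hno _ _ h
      rw [this, Set.ncard_empty]; omega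
    · have : {s : Sym2 (ZMod n) | ∃ u v : ZMod n,
          s = s(u, v) ∧ DConsec n D u v ∧ RSep (cycleG n) r D x u v} = ∅ := by
        ext s
        simp only [Set.mem_setOf_eq, Set.mem_empty_iff_false, iff_false]
        rintro ⟨u, v, _, _, h⟩
        exact hno _ _ h
      rw [this, Set.ncard_empty]; omega
  · have hn2 : 2 * r + 2 ≤ n := by omega
    set w1 : ZMod n := x - (r : ZMod n) + ((2 * r : ℕ) : ZMod n) with hw1
    set w2 : ZMod n := x - (r : ZMod n) + ((n - 1 : ℕ) : ZMod n) with hw2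
    have hcrw : ∀ u : ZMod n,
        ((S15.delta n (u - x) ≤ r ∧ ¬ S15.delta n (u + 1 - x) ≤ r) ∨
          (¬ S15.delta n (u - x) ≤ r ∧ S15.delta n (u + 1 - x) ≤ r)) →
        u = w1 ∨ u = w2 := by
      intro u h
      rw [S15.cross_iff r x hn hn2 u] at h
      rcases h with h | h
      · exact Or.inl (S15.gpos_eq r x hn (by omega) h)
      · exact Or.inr (S15.gpos_eq r x hn (by omega) h)
    constructor
    · -- part 1
      have hsub : {s : Sym2 (ZMod n) | ∃ u : ZMod n,
          s = s(u, u+1) ∧ RSep (cycleG n) r D x u (u+1)} ⊆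
          {s(w1, w1 + 1), s(w2, w2 + 1)} := by
        rintro s ⟨u, rfl, h⟩
        rw [hsep] at h
        rcases hcrw u h with rfl | rfl
        · exact Or.inl rfl
        · exact Or.inr rfl
      calc _ ≤ ({s(w1, w1 + 1), s(w2, w2 + 1)} : Set (Sym2 (ZMod n))).ncard :=
            Set.ncard_le_ncard hsub (Set.toFinite _)
        _ ≤ ({s(w2, w2 + 1)} : Set (Sym2 (ZMod n))).ncard + 1 := Set.ncard_insert_le _ _
        _ ≤ 2 := by rw [Set.ncard_singleton]
    · -- part 2
      set T : ZMod n → Set (Sym2 (ZMod n)) := fun w =>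
        {s | ∃ (u v : ZMod n) (m j : ℕ), s = s(u, v) ∧ u ∉ D ∧ v ∉ D ∧ 0 < m ∧ m < n ∧
          v = u + (m : ZMod n) ∧ (∀ k : ℕ, 0 < k → k < m → u + (k : ZMod n) ∈ D) ∧
          j < m ∧ w = u + (j : ZMod n)} with hT
      have hTsub : {s : Sym2 (ZMod n) | ∃ u v : ZMod n,
          s = s(u, v) ∧ DConsec n D u v ∧ RSep (cycleG n) r D x u v} ⊆ T w1 ∪ T w2 := by
        rintro s ⟨u, v, rfl, ⟨hne, hu, hv, m, hm0, hmn, hveq, hint⟩, hrs⟩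
        rw [hsep] at hrs
        rw [hveq] at hrs
        obtain ⟨j, hj, hcr⟩ := S15.exists_cross_step (fun w => S15.delta n (w - x) ≤ r) m u hrs
        have := hcrw (u + (j : ZMod n)) (by simpa using hcr)
        rcases this with h | h
        · exact Or.inl ⟨u, v, m, j, rfl, hu, hv, hm0, hmn, hveq, hint, hj, h.symm⟩
        · exact Or.inr ⟨u, v, m, j, rfl, hu, hv, hm0, hmn, hveq, hint, hj, h.symm⟩
      have hT1 : ∀ w : ZMod n, (T w).ncard ≤ 1 := by
        intro w
        rw [Set.ncard_le_one (Set.toFinite _)]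
        rintro a ⟨u, v, m, j, rfl, hu, hv, hm0, hmn, hveq, hint, hj, hw⟩
          b ⟨u', v', m', j', rfl, hu', hv', hm0', hmn', hveq', hint', hj', hw'⟩
        obtain ⟨h1, h2⟩ := S15.consec_unique hu hv hm0 hveq hint hu' hv' hm0' hveq' hint'
          hj hj' (hw ▸ hw')
        rw [h1, h2]
      calc _ ≤ (T w1 ∪ T w2).ncard := Set.ncard_le_ncard hTsub (Set.toFinite _)
        _ ≤ (T w1).ncard + (T w2).ncard := Set.ncard_union_le _ _
        _ ≤ 2 := by have := hT1 w1; have := hT1 w2; omega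
end

section
/- For every r ≥ 2 and every n ≥ 1 for which C_n is defined, the minimum size of an r-locating-dominating set of the cycle C_n is at least ⌈n/3⌉. -/
section Aux

variable {n : ℕ}

lemma cycle_adj_succ (hn : 3 ≤ n) (x : ZMod n) : (cycleG n).Adj x (x + 1) := by
  haveI : NeZero n := ⟨by omega⟩
  refine ⟨?_, Or.inr (by ring)⟩
  intro h
  have h1 : ((1 : ℕ) : ZMod n) = 0 := by
    push_cast
    linear_combination -h
  rw [ZMod.natCast_eq_zero_iff] at h1
  exact absurd (Nat.le_of_dvd one_pos h1) (by omega)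

lemma exists_walk_len (hn : 3 ≤ n) (x : ZMod n) (m : ℕ) :
    ∃ w : (cycleG n).Walk x (x + (m : ZMod n)), w.length = m := by
  induction m with
  | zero => exact ⟨SimpleGraph.Walk.nil.copy rfl (by push_cast; ring), by simp⟩
  | succ m ih =>
    obtain ⟨w, hw⟩ := ih
    refine ⟨(w.concat (cycle_adj_succ hn _)).copy rfl (by push_cast; ring), ?_⟩
    simp [SimpleGraph.Walk.length_concat, hw]

lemma walk_int {a b : ZMod n} (w : (cycleG n).Walk a b) :
    ∃ t : ℤ, t.natAbs ≤ w.length ∧ ((t : ZMod n) = b - a) := by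
  induction w with
  | nil => exact ⟨0, by simp⟩
  | @cons a c b h w ih =>
    obtain ⟨t, ht, he⟩ := ih
    rcases h.2 with h2 | h2
    · refine ⟨t - 1, by simp [SimpleGraph.Walk.length_cons]; omega, ?_⟩
      push_cast
      rw [he]
      linear_combination h2
    · refine ⟨t + 1, by simp [SimpleGraph.Walk.length_cons]; omega, ?_⟩
      push_cast
      rw [he]
      linear_combination -h2

lemma cycle_dist_eq (hn : 3 ≤ n) (x y : ZMod n) :
    (cycleG n).dist x y = min (y - x).val (n - (y - x).val) := by
  haveI : NeZero n := ⟨by omega⟩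
  set v := (y - x).val with hv
  have hvn : v < n := ZMod.val_lt _
  have hxy : x + (v : ZMod n) = y := by rw [hv, ZMod.natCast_zmod_val]; ring
  have hyx : y + ((n - v : ℕ) : ZMod n) = x := by
    have : ((n - v : ℕ) : ZMod n) = -(v : ZMod n) := by
      push_cast [Nat.cast_sub hvn.le]
      simp
    rw [this, hv, ZMod.natCast_zmod_val]
    ring
  obtain ⟨w1, hw1⟩ := exists_walk_len hn x v
  obtain ⟨w2, hw2⟩ := exists_walk_len hn y (n - v)
  have hub1 : (cycleG n).dist x y ≤ v := by
    have := SimpleGraph.dist_le (w1.copy rfl hxy)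
    simpa [hw1] using this
  have hub2 : (cycleG n).dist x y ≤ n - v := by
    rw [SimpleGraph.dist_comm]
    have := SimpleGraph.dist_le (w2.copy rfl hyx)
    simpa [hw2] using this
  refine le_antisymm (le_min hub1 hub2) ?_
  have hreach : (cycleG n).Reachable x y := ⟨w1.copy rfl hxy⟩
  obtain ⟨w, hw⟩ := hreach.exists_walk_length_eq_dist
  obtain ⟨t, ht, he⟩ := walk_int w
  rw [hw] at ht
  have hcong : ((t - (v : ℤ) : ℤ) : ZMod n) = 0 := by
    push_cast
    rw [he, hv, ZMod.natCast_zmod_val]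
    ring
  rw [ZMod.intCast_zmod_eq_zero_iff_dvd] at hcong
  obtain ⟨k, hk⟩ := hcong
  rcases eq_or_ne k 0 with hk0 | hk0
  · rw [hk0, mul_zero, sub_eq_zero] at hk
    omega
  · have h1 : n ≤ (t - (v : ℤ)).natAbs := by
      rw [hk, Int.natAbs_mul, Int.natAbs_natCast]
      have h2 : 1 ≤ k.natAbs := by omega
      calc n = n * 1 := (mul_one n).symm
        _ ≤ n * k.natAbs := Nat.mul_le_mul_left n h2
    omega

end Aux

theorem stmt16 (n r : ℕ) (hr : 2 ≤ r) (hn : 3 ≤ n)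
    (D : Set (ZMod n)) (hD : IsLD (cycleG n) r D) :
    (n + 2) / 3 ≤ D.ncard := by
  classical
  haveI : NeZero n := ⟨by omega⟩
  set G := cycleG n with hG
  have hcard : D.ncard + Dᶜ.ncard = n := by
    rw [Set.ncard_add_ncard_compl]
    simp [Nat.card_zmod]
  have hconstGen : (∀ z : ZMod n, Dr G r D z = Dr G r D (z + 1)) →
      ∀ x y : ZMod n, Dr G r D x = Dr G r D y := by
    intro h x y
    have key : ∀ m : ℕ, Dr G r D x = Dr G r D (x + (m : ZMod n)) := by
      intro m
      induction m with
      | zero => simp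
      | succ m ih =>
        have he : x + ((m + 1 : ℕ) : ZMod n) = (x + (m : ZMod n)) + 1 := by
          push_cast; ring
        rw [he, ← h (x + (m : ZMod n))]
        exact ih
    have : y = x + (((y - x).val : ℕ) : ZMod n) := by
      rw [ZMod.natCast_zmod_val]; ring
    rw [this]
    exact key _
  by_cases hall : ∀ x y : ZMod n, Dr G r D x = Dr G r D y
  · -- at most one vertex outside D
    have h1 : Dᶜ.ncard ≤ 1 := by
      rw [Set.ncard_le_one_iff]
      intro a b ha hb
      by_contra hab
      exact hD.2 a ha b hb hab (hall a b)
    omega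
  · have hS : ∃ z : ZMod n, Dr G r D z ≠ Dr G r D (z + 1) := by
      by_contra h
      push_neg at h
      exact hall (hconstGen h)
    have hn2 : 2 * r + 2 ≤ n := by
      by_contra h
      push_neg at h
      apply hall
      have hdle : ∀ a b : ZMod n, G.dist a b ≤ r := by
        intro a b
        rw [hG, cycle_dist_eq hn]
        have := ZMod.val_lt (b - a)
        omega
      intro x y
      unfold Dr
      ext c
      simp [hdle]
    have hfind : ∀ x : ZMod n, ∃ m : ℕ,
        Dr G r D (x + (m : ZMod n)) ≠ Dr G r D (x + (m : ZMod n) + 1) := by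
      intro x
      obtain ⟨z, hz⟩ := hS
      refine ⟨(z - x).val, ?_⟩
      have : x + (((z - x).val : ℕ) : ZMod n) = z := by
        rw [ZMod.natCast_zmod_val]; ring
      rw [this]
      exact hz
    set S : Set (ZMod n) := {z | Dr G r D z ≠ Dr G r D (z + 1)} with hSdef
    let g : ZMod n → ZMod n := fun x => x + ((Nat.find (hfind x) : ℕ) : ZMod n)
    have hgS : ∀ x, g x ∈ S := fun x => Nat.find_spec (hfind x)
    have hgEq : ∀ x, Dr G r D x = Dr G r D (g x) := by
      intro x
      have key : ∀ m : ℕ, m ≤ Nat.find (hfind x) →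
          Dr G r D x = Dr G r D (x + (m : ZMod n)) := by
        intro m
        induction m with
        | zero => simp
        | succ m ih =>
          intro hm
          have hlt : m < Nat.find (hfind x) := by omega
          have hne := Nat.find_min (hfind x) hlt
          rw [not_ne_iff] at hne
          have he : x + ((m + 1 : ℕ) : ZMod n) = x + (m : ZMod n) + 1 := by
            push_cast; ring
          rw [he, ← hne]
          exact ih hlt.le
      exact key _ le_rfl
    have hinj : Set.InjOn g Dᶜ := by
      intro a ha b hb hab
      by_contra hne
      exact hD.2 a ha b hb hne (by rw [hgEq a, hgEq b, hab])
    have h1 : Dᶜ.ncard ≤ S.ncard :=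
      Set.ncard_le_ncard_of_injOn g (fun x _ => hgS x) hinj (Set.toFinite S)
    have hSsub : S ⊆ ((fun c => c + (r : ZMod n)) '' D) ∪
        ((fun c => c - ((r : ZMod n) + 1)) '' D) := by
      intro x hx
      obtain ⟨c, hc⟩ := Set.symmDiff_nonempty.mpr hx
      rw [Set.mem_symmDiff] at hc
      have hval : ∀ a b : ZMod n, G.dist a b = min (b - a).val (n - (b - a).val) :=
        fun a b => cycle_dist_eq hn a b
      rcases hc with ⟨hc1, hc2⟩ | ⟨hc1, hc2⟩
      · -- c ∈ Dr x, c ∉ Dr (x+1) : conclude x = c + r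
        obtain ⟨hcD, hd1⟩ := hc1
        have hd2 : ¬ G.dist (x + 1) c ≤ r := fun h => hc2 ⟨hcD, h⟩
        set v := (c - x).val with hvdef
        have hvn : v < n := ZMod.val_lt _
        rw [hval] at hd1
        rw [hval] at hd2
        have hcx : c - x = ((v : ℕ) : ZMod n) := by rw [hvdef, ZMod.natCast_zmod_val]
        by_cases hv0 : v = 0
        · exfalso
          have hc0 : c = x := by
            have : c - x = 0 := by rw [hcx, hv0]; simp
            linear_combination this
          have : c - (x + 1) = ((n - 1 : ℕ) : ZMod n) := by
            rw [hc0]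
            push_cast [Nat.cast_sub (by omega : 1 ≤ n)]
            simp
          rw [this, ZMod.val_cast_of_lt (by omega)] at hd2
          omega
        · have hw : (c - (x + 1)).val = v - 1 := by
            have : c - (x + 1) = ((v - 1 : ℕ) : ZMod n) := by
              push_cast [Nat.cast_sub (by omega : 1 ≤ v)]
              rw [← hcx]
              ring
            rw [this, ZMod.val_cast_of_lt (by omega)]
          rw [hw] at hd2
          have hveq : v = n - r := by omega
          left
          refine ⟨c, hcD, ?_⟩
          have : c - x = ((n - r : ℕ) : ZMod n) := by rw [hcx, hveq]
          have h2 : ((n - r : ℕ) : ZMod n) = -(r : ZMod n) := by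
            push_cast [Nat.cast_sub (by omega : r ≤ n)]
            simp
          rw [h2] at this
          show c + (r : ZMod n) = x
          linear_combination this
      · -- c ∈ Dr (x+1), c ∉ Dr x : conclude x = c - (r+1)
        obtain ⟨hcD, hd1⟩ := hc1
        have hd2 : ¬ G.dist x c ≤ r := fun h => hc2 ⟨hcD, h⟩
        set v := (c - x).val with hvdef
        have hvn : v < n := ZMod.val_lt _
        rw [hval] at hd1
        rw [hval] at hd2
        have hcx : c - x = ((v : ℕ) : ZMod n) := by rw [hvdef, ZMod.natCast_zmod_val]
        have hv1 : 1 ≤ v := by omega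
        have hw : (c - (x + 1)).val = v - 1 := by
          have : c - (x + 1) = ((v - 1 : ℕ) : ZMod n) := by
            push_cast [Nat.cast_sub hv1]
            rw [← hcx]
            ring
          rw [this, ZMod.val_cast_of_lt (by omega)]
        rw [hw] at hd1
        have hveq : v = r + 1 := by omega
        right
        refine ⟨c, hcD, ?_⟩
        have : c - x = ((r + 1 : ℕ) : ZMod n) := by rw [hcx, hveq]
        push_cast at this
        show c - ((r : ZMod n) + 1) = x
        linear_combination this
    have h2 : S.ncard ≤ D.ncard + D.ncard := by
      calc S.ncard ≤ (((fun c => c + (r : ZMod n)) '' D) ∪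
          ((fun c => c - ((r : ZMod n) + 1)) '' D)).ncard :=
            Set.ncard_le_ncard hSsub (Set.toFinite _)
        _ ≤ ((fun c => c + (r : ZMod n)) '' D).ncard +
            ((fun c => c - ((r : ZMod n) + 1)) '' D).ncard := Set.ncard_union_le _ _
        _ ≤ D.ncard + D.ncard :=
            add_le_add (Set.ncard_image_le (Set.toFinite D)) (Set.ncard_image_le (Set.toFinite D))
    omega
end

section
/- For n = 6k+3 with k ≥ 1, the minimum size of a 2-locating-dominating set of the cycle C_n is ⌈n/3⌉ + 1 = 2k+2. Moreover, M_2^{LD}(C_6) = 3 = ⌈6/3⌉ + 1. -/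
/-!
The lower bound reads a 2-locating-dominating set `s` of `C_n` through its gaps, the distances
from each element of `s` to the next one. Two vertices `x` and `x + d` outside `s` with
`1 ≤ d ≤ 4` are separated exactly when `s` meets the symmetric difference of their balls, so
only a few local gap patterns can occur: every gap is at most 5, a gap 5 has gaps 1 on both
sides, a gap 4 or 5 is followed by a gap at most 2 or by the gaps 3, 1, and a gap 3 has a gap 1
next to it. Pairing every gap of length at least 4 with the next short gap shows that the gaps
average at most 3, i.e. `n ≤ 3 |s|`. If equality held, every pair would sum to 6 and every other
gap would be 3; the gaps 1 would then be exactly the successors and also exactly the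
predecessors of the gaps 5, so no gap 3 could have a gap 1 next to it, all gaps would be paired,
and `n` would be even.

For `n = 6k + 3` the vertices whose representative in `[0, n)` is `0` or `2` modulo 6 form a
2-locating-dominating set of size `2k + 2`. The case `C_6` is a finite check.
-/

section CycleGeometry

variable {n : ℕ}

lemma cycleG_adj_iff {x y : ZMod n} :
    (cycleG n).Adj x y ↔ x ≠ y ∧ (y = x + 1 ∨ y = x - 1) := by
  rw [cycleG, SimpleGraph.fromRel_adj]
  refine and_congr_right fun _ => ⟨?_, ?_⟩
  · rintro (h | h)
    · exact Or.inr (by linear_combination -h)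
    · exact Or.inl (by linear_combination h)
  · rintro (h | h)
    · exact Or.inr (by linear_combination h)
    · exact Or.inl (by linear_combination -h)

lemma cycleG_adj_add_one (hn : n ≠ 1) (x : ZMod n) : (cycleG n).Adj x (x + 1) := by
  have := ZMod.nontrivial_iff.2 hn
  simp [cycleG_adj_iff]

lemma cycleG_adj_sub_one (hn : n ≠ 1) (x : ZMod n) : (cycleG n).Adj x (x - 1) := by
  simpa using (cycleG_adj_add_one hn (x - 1)).symm

lemma exists_eq_add_of_cycleG_walk {x y : ZMod n} (p : (cycleG n).Walk x y) :
    ∃ j : ℤ, j.natAbs ≤ p.length ∧ y = x + j := by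
  induction p with
  | nil => exact ⟨0, by simp⟩
  | @cons x z y h _ ih =>
    obtain ⟨j, hj, rfl⟩ := ih
    rw [SimpleGraph.Walk.length_cons]
    rcases (cycleG_adj_iff.1 h).2 with rfl | rfl
    · exact ⟨1 + j, by omega, by push_cast; ring⟩
    · exact ⟨-1 + j, by omega, by push_cast; ring⟩

lemma exists_cycleG_walk_add (hn : n ≠ 1) (x : ZMod n) (j : ℤ) :
    ∃ p : (cycleG n).Walk x (x + j), p.length = j.natAbs := by
  induction j using Int.induction_on with
  | zero => exact ⟨SimpleGraph.Walk.nil.copy rfl (by simp), by simp⟩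
  | succ i ih =>
    obtain ⟨p, hp⟩ := ih
    refine ⟨(p.concat (cycleG_adj_add_one hn _)).copy rfl (by push_cast; ring), ?_⟩
    simp only [SimpleGraph.Walk.length_copy, SimpleGraph.Walk.length_concat, hp]
    omega
  | pred i ih =>
    obtain ⟨p, hp⟩ := ih
    refine ⟨(p.concat (cycleG_adj_sub_one hn _)).copy rfl (by push_cast; ring), ?_⟩
    simp only [SimpleGraph.Walk.length_copy, SimpleGraph.Walk.length_concat, hp]
    omega

lemma cycleG_dist_le_iff (hn : n ≠ 1) {x y : ZMod n} {r : ℕ} :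
    (cycleG n).dist x y ≤ r ↔ ∃ j : ℤ, j.natAbs ≤ r ∧ y = x + j := by
  constructor
  · intro h
    have hy : y = x + (((y - x).cast : ℤ) : ZMod n) := by rw [ZMod.intCast_zmod_cast]; ring
    have hreach : (cycleG n).Reachable x y := by
      rw [hy]
      exact (exists_cycleG_walk_add hn x _).elim fun p _ => p.reachable
    obtain ⟨q, hq⟩ := hreach.exists_walk_length_eq_dist
    obtain ⟨j, hj, hxy⟩ := exists_eq_add_of_cycleG_walk q
    exact ⟨j, (hq ▸ hj).trans h, hxy⟩
  · rintro ⟨j, hj, rfl⟩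
    obtain ⟨p, hp⟩ := exists_cycleG_walk_add hn x j
    exact (SimpleGraph.dist_le p).trans (hp ▸ hj)

lemma mem_Dr_cycleG_iff (hn : n ≠ 1) {D : Set (ZMod n)} {r : ℕ} {x y : ZMod n} :
    y ∈ Dr (cycleG n) r D x ↔ y ∈ D ∧ ∃ j : ℤ, j.natAbs ≤ r ∧ y = x + j :=
  and_congr_right' (cycleG_dist_le_iff hn)

lemma add_intCast_inj (x : ZMod n) {i j : ℤ} (h : (i - j).natAbs < n) :
    x + i = x + j ↔ i = j := by
  refine ⟨fun hij => ?_, fun hij => hij ▸ rfl⟩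
  have : ((i - j : ℤ) : ZMod n) = 0 := by push_cast; linear_combination hij
  rw [ZMod.intCast_zmod_eq_zero_iff_dvd] at this
  have := Int.eq_zero_of_dvd_of_natAbs_lt_natAbs this (by simpa using h)
  omega

end CycleGeometry

section Locality

variable {n : ℕ} {D : Set (ZMod n)}

lemma isLD_cycleG_iff (hn : 5 ≤ n) :
    IsLD (cycleG n) 2 D ↔ (∀ x ∉ D, (Dr (cycleG n) 2 D x).Nonempty) ∧
      ∀ x (d : ℤ), 1 ≤ d → d ≤ 4 → x ∉ D → x + d ∉ D →
        Dr (cycleG n) 2 D x ≠ Dr (cycleG n) 2 D (x + d) := by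
  refine ⟨fun h => ⟨h.1, fun x d hd1 hd4 hx hxd => h.2 x hx _ hxd fun hx' => ?_⟩,
    fun ⟨hdom, hsep⟩ => ⟨hdom, fun x hx y hy hxy hDr => ?_⟩⟩
  · have := (add_intCast_inj x (i := 0) (j := d) (by omega)).1 (by simpa using hx')
    omega
  obtain ⟨c, hc⟩ := hdom x hx
  have hc' := hDr ▸ hc
  rw [mem_Dr_cycleG_iff (by omega)] at hc hc'
  obtain ⟨-, a, ha, rfl⟩ := hc
  obtain ⟨-, b, hb, hab⟩ := hc'
  rcases lt_trichotomy a b with h | rfl | h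
  · have hx' : x = y + ((b - a : ℤ) : ZMod n) := by push_cast; linear_combination hab
    rw [hx'] at hx hDr
    exact hsep y (b - a) (by omega) (by omega) hy hx hDr.symm
  · exact hxy (add_right_cancel hab)
  · have hy' : y = x + ((a - b : ℤ) : ZMod n) := by push_cast; linear_combination -hab
    rw [hy'] at hy hDr
    exact hsep x (a - b) (by omega) (by omega) hx hy hDr

/-- The admissible offsets `j` form the symmetric difference of the balls `[-2, 2]` and
`[d - 2, d + 2]`. -/
lemma Dr_cycleG_eq_Dr_add_iff (hn : 9 ≤ n) (x : ZMod n) {d : ℤ} (hd1 : 1 ≤ d) (hd4 : d ≤ 4) :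
    Dr (cycleG n) 2 D x = Dr (cycleG n) 2 D (x + d) ↔
      ∀ j : ℤ, -2 ≤ j → j ≤ d + 2 → (j < d - 2 ∨ 2 < j) → x + j ∉ D := by
  have hball : ∀ y, y ∈ Dr (cycleG n) 2 D (x + d) ↔
      y ∈ D ∧ ∃ j : ℤ, (j - d).natAbs ≤ 2 ∧ y = x + j := by
    intro y
    rw [mem_Dr_cycleG_iff (by omega)]
    refine and_congr_right' ⟨?_, ?_⟩
    · rintro ⟨b, hb, rfl⟩
      exact ⟨d + b, by omega, by push_cast; ring⟩
    · rintro ⟨j, hj, rfl⟩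
      exact ⟨j - d, hj, by push_cast; ring⟩
  have hinj : ∀ i j : ℤ, -2 ≤ i → i ≤ 6 → -2 ≤ j → j ≤ 6 → x + i = x + j → i = j :=
    fun i j _ _ _ _ h => (add_intCast_inj x (by omega)).1 h
  constructor
  · intro h j hj1 hj2 hj3 hmem
    rcases hj3 with hj3 | hj3
    · have hx : x + j ∈ Dr (cycleG n) 2 D x :=
        (mem_Dr_cycleG_iff (by omega)).2 ⟨hmem, j, by omega, rfl⟩
      obtain ⟨-, i, hi, he⟩ := (hball _).1 (h ▸ hx)
      have := hinj j i (by omega) (by omega) (by omega) (by omega) he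
      omega
    · obtain ⟨-, i, hi, he⟩ := (mem_Dr_cycleG_iff (by omega)).1
        (h ▸ (hball _).2 ⟨hmem, j, by omega, rfl⟩)
      have := hinj j i (by omega) (by omega) (by omega) (by omega) he
      omega
  · intro h
    ext y
    rw [mem_Dr_cycleG_iff (by omega), hball]
    constructor
    · rintro ⟨hy, j, hj, rfl⟩
      refine ⟨hy, j, ?_, rfl⟩
      by_contra hjd
      exact h j (by omega) (by omega) (by omega) hy
    · rintro ⟨hy, j, hj, rfl⟩
      refine ⟨hy, j, ?_, rfl⟩
      by_contra hjd
      exact h j (by omega) (by omega) (by omega) hy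

lemma IsLD.exists_add_mem (hn : n ≠ 1) (hLD : IsLD (cycleG n) 2 D) {x : ZMod n} (hx : x ∉ D) :
    ∃ j : ℤ, j.natAbs ≤ 2 ∧ x + j ∈ D := by
  obtain ⟨y, hy⟩ := hLD.1 x hx
  obtain ⟨hyD, j, hj, rfl⟩ := (mem_Dr_cycleG_iff hn).1 hy
  exact ⟨j, hj, hyD⟩

lemma IsLD.exists_separating_mem (hn : 9 ≤ n) (hLD : IsLD (cycleG n) 2 D) {x : ZMod n} {d : ℤ}
    (hd1 : 1 ≤ d) (hd4 : d ≤ 4) (hx : x ∉ D) (hxd : x + d ∉ D) :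
    ∃ j : ℤ, -2 ≤ j ∧ j ≤ d + 2 ∧ (j < d - 2 ∨ 2 < j) ∧ x + j ∈ D := by
  by_contra! h
  exact ((isLD_cycleG_iff (by omega)).1 hLD).2 x d hd1 hd4 hx hxd
    ((Dr_cycleG_eq_Dr_add_iff hn x hd1 hd4).2 h)

lemma IsLD.sub_two_mem_or_add_three_mem (hn : 9 ≤ n) (hLD : IsLD (cycleG n) 2 D)
    {x : ZMod n} (hx : x ∉ D) (hx1 : x + 1 ∉ D) : x - 2 ∈ D ∨ x + 3 ∈ D := by
  obtain ⟨j, hj1, hj2, hj3, hj⟩ := hLD.exists_separating_mem hn (d := 1) le_rfl (by norm_num) hx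
    (by simpa using hx1)
  obtain rfl | rfl : j = -2 ∨ j = 3 := by omega
  · exact Or.inl (by simpa [sub_eq_add_neg] using hj)
  · exact Or.inr (by simpa using hj)

lemma IsLD.sub_two_or_sub_one_or_add_three_or_add_four_mem (hn : 9 ≤ n) (hLD : IsLD (cycleG n) 2 D)
    {x : ZMod n} (hx : x ∉ D) (hx2 : x + 2 ∉ D) :
    x - 2 ∈ D ∨ x - 1 ∈ D ∨ x + 3 ∈ D ∨ x + 4 ∈ D := by
  obtain ⟨j, hj1, hj2, hj3, hj⟩ :=
    hLD.exists_separating_mem hn (d := 2) (by norm_num) (by norm_num) hx (by simpa using hx2)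
  obtain rfl | rfl | rfl | rfl : j = -2 ∨ j = -1 ∨ j = 3 ∨ j = 4 := by omega
  · exact Or.inl (by simpa [sub_eq_add_neg] using hj)
  · exact Or.inr (Or.inl (by simpa [sub_eq_add_neg] using hj))
  · exact Or.inr (Or.inr (Or.inl (by simpa using hj)))
  · exact Or.inr (Or.inr (Or.inr (by simpa using hj)))

end Locality

section Gaps

open Finset

variable {n : ℕ} (s : Finset (ZMod n))

noncomputable def gap (c : ZMod n) : ℕ :=
  sInf {t : ℕ | 0 < t ∧ c + t ∈ s}

noncomputable def nextMem (c : ZMod n) : ZMod n :=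
  c + gap s c

noncomputable def arc (c : ZMod n) : Finset (ZMod n) :=
  (range (gap s c)).image fun j : ℕ => c + j

variable {s} {c c' : ZMod n}

lemma gap_pos_and_nextMem_mem [NeZero n] (hc : c ∈ s) : 0 < gap s c ∧ nextMem s c ∈ s :=
  Nat.sInf_mem (s := {t : ℕ | 0 < t ∧ c + t ∈ s}) ⟨n, Nat.pos_of_neZero n, by simpa using hc⟩

lemma gap_pos [NeZero n] (hc : c ∈ s) : 0 < gap s c := (gap_pos_and_nextMem_mem hc).1

lemma nextMem_mem [NeZero n] (hc : c ∈ s) : nextMem s c ∈ s := (gap_pos_and_nextMem_mem hc).2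

lemma gap_le {t : ℕ} (ht : 0 < t) (h : c + t ∈ s) : gap s c ≤ t :=
  Nat.sInf_le ⟨ht, h⟩

lemma gap_le_card [NeZero n] (hc : c ∈ s) : gap s c ≤ n :=
  gap_le (Nat.pos_of_neZero n) (by simpa using hc)

lemma add_notMem_of_lt_gap {t : ℕ} (ht : 0 < t) (h : t < gap s c) : c + t ∉ s :=
  fun hm => (gap_le ht hm).not_gt h

lemma gap_eq_one_iff [NeZero n] (hc : c ∈ s) : gap s c = 1 ↔ c + 1 ∈ s := by
  refine ⟨fun h => by simpa [nextMem, h] using nextMem_mem hc, fun h => ?_⟩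
  have := gap_le one_pos (by simpa using h)
  have := gap_pos hc
  omega

lemma add_intCast_notMem_of_lt_gap {t : ℤ} (ht : 0 < t) (h : t < gap s c) : c + t ∉ s := by
  lift t to ℕ using ht.le
  exact_mod_cast add_notMem_of_lt_gap (by omega) (by omega)

lemma nextMem_sub_notMem_of_lt_gap {t : ℕ} (ht : 0 < t) (h : t < gap s c) :
    nextMem s c - t ∉ s := by
  have := add_notMem_of_lt_gap (s := s) (c := c) (t := gap s c - t) (by omega) (by omega)
  rwa [Nat.cast_sub h.le, ← add_sub_assoc] at this

lemma eq_of_eq_add_of_lt_gap (hc' : c' ∈ s) {t : ℕ} (ht : t < gap s c) (h : c' = c + t) :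
    c' = c := by
  rcases Nat.eq_zero_or_pos t with rfl | ht0
  · simpa using h
  · exact absurd (h ▸ hc') (add_notMem_of_lt_gap ht0 ht)

lemma nextMem_injOn [NeZero n] : Set.InjOn (nextMem s) s := by
  have key : ∀ {a b}, a ∈ s → b ∈ s → nextMem s a = nextMem s b → gap s a ≤ gap s b → a = b := by
    intro a b ha hb h hle
    refine eq_of_eq_add_of_lt_gap ha (t := gap s b - gap s a) (by have := gap_pos ha; omega) ?_
    rw [Nat.cast_sub hle]
    unfold nextMem at h
    linear_combination h
  intro a ha b hb h
  rcases le_total (gap s a) (gap s b) with hle | hle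
  · exact key ha hb h hle
  · exact (key hb ha h.symm hle).symm

lemma card_arc [NeZero n] (hc : c ∈ s) : (arc s c).card = gap s c := by
  rw [arc, card_image_of_injOn, card_range]
  intro i hi j hj hij
  have := gap_le_card hc
  simp only [coe_range, Set.mem_Iio] at hi hj
  exact (ZMod.val_cast_of_lt (by omega)).symm.trans
    ((congrArg ZMod.val (add_left_cancel hij)).trans (ZMod.val_cast_of_lt (by omega)))

lemma pairwiseDisjoint_arc [NeZero n] : (s : Set (ZMod n)).PairwiseDisjoint (arc s) := by
  have key : ∀ {c c' : ZMod n} {i j : ℕ}, c' ∈ s → i < gap s c → j ≤ i →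
      c + i = c' + j → c' = c := fun {c c' i j} hc' hi hji h =>
    eq_of_eq_add_of_lt_gap hc' (t := i - j) (by omega)
      (by rw [Nat.cast_sub hji]; linear_combination -h)
  intro c hc c' hc' hne
  refine disjoint_left.2 fun v hv hv' => hne ?_
  simp only [arc, mem_image, mem_range] at hv hv'
  obtain ⟨i, hi, rfl⟩ := hv
  obtain ⟨j, hj, he⟩ := hv'
  rcases le_total j i with hji | hij
  · exact (key hc' hi hji he.symm).symm
  · exact key hc hj hij he

lemma exists_mem_arc [NeZero n] (hs : s.Nonempty) (v : ZMod n) : ∃ c ∈ s, v ∈ arc s c := by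
  obtain ⟨a, ha⟩ := hs
  have hne : {t : ℕ | v - t ∈ s}.Nonempty := ⟨(v - a).val, by simpa using ha⟩
  set r := sInf {t : ℕ | v - t ∈ s}
  have hr : v - r ∈ s := Nat.sInf_mem hne
  refine ⟨v - r, hr, mem_image.2 ⟨r, mem_range.2 ?_, by ring⟩⟩
  by_contra! hle
  have hmem : v - ((r - gap s (v - r) : ℕ) : ZMod n) ∈ s := by
    rw [Nat.cast_sub hle]
    convert nextMem_mem hr using 1
    rw [nextMem]
    ring
  have := Nat.sInf_le (s := {t : ℕ | v - t ∈ s}) hmem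
  have := gap_pos hr
  omega

theorem sum_gap [NeZero n] (hs : s.Nonempty) : ∑ c ∈ s, gap s c = n := by
  have hcover : s.biUnion (arc s) = univ :=
    eq_univ_of_forall fun v => mem_biUnion.2 (exists_mem_arc hs v)
  calc ∑ c ∈ s, gap s c = ∑ c ∈ s, (arc s c).card := (sum_congr rfl fun c hc => card_arc hc).symm
    _ = (s.biUnion (arc s)).card := (card_biUnion pairwiseDisjoint_arc).symm
    _ = n := by rw [hcover, card_univ, ZMod.card]

end Gaps

section GapsOfLocatingDominating

open Finset

variable {n : ℕ} {s : Finset (ZMod n)} {c : ZMod n}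

lemma IsLD.gap_le_five (hn : 9 ≤ n) (hLD : IsLD (cycleG n) 2 (s : Set (ZMod n))) :
    gap s c ≤ 5 := by
  by_contra! h6
  obtain ⟨j, hj, hmem⟩ := hLD.exists_add_mem (by omega) (x := c + 3)
    (by simpa using add_notMem_of_lt_gap (s := s) (c := c) (t := 3) (by norm_num) (by omega))
  refine add_intCast_notMem_of_lt_gap (s := s) (c := c) (t := 3 + j) (by omega) (by omega) ?_
  rwa [Int.cast_add, Int.cast_ofNat, ← add_assoc]

lemma IsLD.sub_one_mem_of_gap_eq_five (hn : 9 ≤ n) (hLD : IsLD (cycleG n) 2 (s : Set (ZMod n)))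
    (h5 : gap s c = 5) : c - 1 ∈ s := by
  have h (t : ℕ) (h0 : 0 < t) (ht : t < 5) (x : ZMod n) (hx : x = c + t) : x ∉ s :=
    hx ▸ add_notMem_of_lt_gap h0 (h5 ▸ ht)
  rcases hLD.sub_two_mem_or_add_three_mem hn (x := c + 1) (h 1 one_pos (by norm_num) _ (by simp))
    (h 2 two_pos (by norm_num) _ (by push_cast; ring)) with h' | h'
  · exact (by ring : c + 1 - 2 = c - 1) ▸ h'
  · exact absurd h' (h 4 (by norm_num) (by norm_num) _ (by push_cast; ring))

lemma IsLD.gap_nextMem_eq_one_of_gap_eq_five [NeZero n] (hn : 9 ≤ n)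
    (hLD : IsLD (cycleG n) 2 (s : Set (ZMod n))) (hc : c ∈ s) (h5 : gap s c = 5) :
    gap s (nextMem s c) = 1 := by
  have h (t : ℕ) (h0 : 0 < t) (ht : t < 5) (x : ZMod n) (hx : x = c + t) : x ∉ s :=
    hx ▸ add_notMem_of_lt_gap h0 (h5 ▸ ht)
  rcases hLD.sub_two_mem_or_add_three_mem hn (x := c + 3)
    (h 3 (by norm_num) (by norm_num) _ (by push_cast; ring))
    (h 4 (by norm_num) (by norm_num) _ (by push_cast; ring)) with h' | h'
  · exact absurd h' (h 1 one_pos (by norm_num) _ (by push_cast; ring))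
  · have e : c + 3 + 3 = nextMem s c + 1 := by rw [nextMem, h5]; push_cast; ring
    exact (gap_eq_one_iff (nextMem_mem hc)).2 (e ▸ h')

lemma IsLD.gap_nextMem_le_three_of_four_le (hn : 9 ≤ n)
    (hLD : IsLD (cycleG n) 2 (s : Set (ZMod n))) (h4 : 4 ≤ gap s c) :
    gap s (nextMem s c) ≤ 3 := by
  by_contra! h4'
  set c' := nextMem s c
  have hl (t : ℕ) (h0 : 0 < t) (ht : t < 4) (x : ZMod n) (hx : x = c' - t) : x ∉ s :=
    hx ▸ nextMem_sub_notMem_of_lt_gap h0 (by omega)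
  have hr (t : ℕ) (h0 : 0 < t) (ht : t < 4) (x : ZMod n) (hx : x = c' + t) : x ∉ s :=
    hx ▸ add_notMem_of_lt_gap h0 (by omega)
  rcases hLD.sub_two_or_sub_one_or_add_three_or_add_four_mem hn (x := c' - 1)
      (hl 1 one_pos (by norm_num) _ (by simp)) (hr 1 one_pos (by norm_num) _ (by push_cast; ring))
    with h' | h' | h' | h'
  · exact hl 3 (by norm_num) (by norm_num) _ (by push_cast; ring) h'
  · exact hl 2 (by norm_num) (by norm_num) _ (by push_cast; ring) h'
  · exact hr 2 (by norm_num) (by norm_num) _ (by push_cast; ring) h'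
  · exact hr 3 (by norm_num) (by norm_num) _ (by push_cast; ring) h'

lemma IsLD.sub_one_mem_or_gap_nextMem_eq_one_of_gap_eq_three [NeZero n] (hn : 9 ≤ n)
    (hLD : IsLD (cycleG n) 2 (s : Set (ZMod n))) (hc : c ∈ s) (h3 : gap s c = 3) :
    c - 1 ∈ s ∨ gap s (nextMem s c) = 1 := by
  have h (t : ℕ) (h0 : 0 < t) (ht : t < 3) (x : ZMod n) (hx : x = c + t) : x ∉ s :=
    hx ▸ add_notMem_of_lt_gap h0 (h3 ▸ ht)
  rcases hLD.sub_two_mem_or_add_three_mem hn (x := c + 1) (h 1 one_pos (by norm_num) _ (by simp))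
    (h 2 two_pos (by norm_num) _ (by push_cast; ring)) with h' | h'
  · exact Or.inl ((by ring : c + 1 - 2 = c - 1) ▸ h')
  · have e : c + 1 + 3 = nextMem s c + 1 := by rw [nextMem, h3]; push_cast; ring
    exact Or.inr ((gap_eq_one_iff (nextMem_mem hc)).2 (e ▸ h'))

end GapsOfLocatingDominating

theorem Finset.sum_eq_sum_add_sum_sdiff_of_injOn {α M : Type*} [DecidableEq α] [AddCommMonoid M]
    {s P : Finset α} {φ : α → α} (hP : P ⊆ s) (hφ : ∀ c ∈ P, φ c ∈ s \ P) (hinj : Set.InjOn φ P)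
    (f : α → M) :
    ∑ c ∈ s, f c = ∑ c ∈ P, (f c + f (φ c)) + ∑ c ∈ s \ (P ∪ P.image φ), f c := by
  have hsub : P ∪ P.image φ ⊆ s :=
    union_subset hP fun c hc => by
      obtain ⟨b, hb, rfl⟩ := mem_image.1 hc
      exact (mem_sdiff.1 (hφ b hb)).1
  have hdisj : Disjoint P (P.image φ) := disjoint_right.2 fun c hc => by
    obtain ⟨b, hb, rfl⟩ := mem_image.1 hc
    exact (mem_sdiff.1 (hφ b hb)).2
  rw [← sum_sdiff hsub, sum_union hdisj, sum_image hinj, sum_add_distrib, add_comm]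

section Pairing

open Finset

variable {n : ℕ} [NeZero n] (s : Finset (ZMod n))

noncomputable def bigGaps : Finset (ZMod n) :=
  s.filter fun c => 4 ≤ gap s c

/-- A gap of length at least 4 is followed either by a gap of length at most 2, or by a gap of
length 3 and then one of length 1 (`IsLD.gap_cases_of_four_le`); its partner is that short gap. -/
noncomputable def partner (c : ZMod n) : ZMod n :=
  if gap s (nextMem s c) = 3 then nextMem s (nextMem s c) else nextMem s c

noncomputable def unpaired : Finset (ZMod n) :=
  s \ (bigGaps s ∪ (bigGaps s).image (partner s))

variable {s} {c : ZMod n}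

lemma IsLD.gap_cases_of_four_le (hn : 9 ≤ n) (hLD : IsLD (cycleG n) 2 (s : Set (ZMod n)))
    (hc : c ∈ s) (h4 : 4 ≤ gap s c) :
    (gap s c = 4 ∧ gap s (nextMem s c) = 3 ∧ gap s (nextMem s (nextMem s c)) = 1) ∨
      (gap s (nextMem s c) ≤ 2 ∧ gap s c + gap s (nextMem s c) ≤ 6) := by
  have h3 := hLD.gap_nextMem_le_three_of_four_le hn h4
  rcases (show gap s c = 4 ∨ gap s c = 5 by have := hLD.gap_le_five hn (c := c); omega)
    with h | h
  · rcases (show gap s (nextMem s c) = 3 ∨ gap s (nextMem s c) ≤ 2 by omega) with h' | h'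
    · refine Or.inl ⟨h, h', ?_⟩
      have h1 := hLD.sub_one_mem_or_gap_nextMem_eq_one_of_gap_eq_three hn (nextMem_mem hc) h'
      refine h1.resolve_left ?_
      simpa using nextMem_sub_notMem_of_lt_gap (s := s) (c := c) (t := 1) one_pos (by omega)
    · exact Or.inr ⟨h', by omega⟩
  · have := hLD.gap_nextMem_eq_one_of_gap_eq_five hn hc h
    exact Or.inr ⟨by omega, by omega⟩

lemma IsLD.partner_mem_sdiff (hn : 9 ≤ n) (hLD : IsLD (cycleG n) 2 (s : Set (ZMod n)))
    (hc : c ∈ bigGaps s) : partner s c ∈ s \ bigGaps s := by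
  obtain ⟨hcs, h4⟩ := mem_filter.1 hc
  rw [mem_sdiff, bigGaps, mem_filter, partner]
  rcases hLD.gap_cases_of_four_le hn hcs h4 with ⟨-, h3, h1⟩ | ⟨h2, -⟩
  · rw [if_pos h3]
    exact ⟨nextMem_mem (nextMem_mem hcs), by omega⟩
  · rw [if_neg (by omega)]
    exact ⟨nextMem_mem hcs, by omega⟩

lemma IsLD.gap_add_gap_partner_le_six (hn : 9 ≤ n) (hLD : IsLD (cycleG n) 2 (s : Set (ZMod n)))
    (hc : c ∈ bigGaps s) :
    gap s c + gap s (partner s c) ≤ 6 ∧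
      (gap s c + gap s (partner s c) = 6 → partner s c = nextMem s c) := by
  obtain ⟨hcs, h4⟩ := mem_filter.1 hc
  rcases hLD.gap_cases_of_four_le hn hcs h4 with ⟨h4, h3, h1⟩ | ⟨h2, h6⟩
  · rw [partner, if_pos h3]
    omega
  · rw [partner, if_neg (by omega)]
    exact ⟨h6, fun _ => rfl⟩

lemma injOn_partner : Set.InjOn (partner s) (bigGaps s) := by
  intro a ha b hb h
  obtain ⟨has, ha4⟩ := mem_filter.1 ha
  obtain ⟨hbs, hb4⟩ := mem_filter.1 hb
  unfold partner at h
  split_ifs at h with h1 h2 h2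
  · exact nextMem_injOn has hbs (nextMem_injOn (nextMem_mem has) (nextMem_mem hbs) h)
  · have := nextMem_injOn (nextMem_mem has) hbs h
    rw [this] at h1
    omega
  · have := nextMem_injOn has (nextMem_mem hbs) h
    rw [← this] at h2
    omega
  · exact nextMem_injOn has hbs h

end Pairing

section LowerBound

open Finset

variable {n : ℕ} {s : Finset (ZMod n)}

lemma IsLD.nonempty (hn : n ≠ 1) (hLD : IsLD (cycleG n) 2 (s : Set (ZMod n))) : s.Nonempty := by
  by_contra hs
  rw [not_nonempty_iff_eq_empty] at hs
  subst hs
  obtain ⟨j, -, hj⟩ := hLD.exists_add_mem hn (x := 0) (by simp)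
  simp at hj

lemma IsLD.gap_ne_three [NeZero n] (hn : 9 ≤ n) (hLD : IsLD (cycleG n) 2 (s : Set (ZMod n)))
    (hone : ∀ c ∈ s, gap s c = 1 → ∃ b ∈ s, gap s b = 5 ∧ nextMem s b = c)
    {c : ZMod n} (hc : c ∈ s) : gap s c ≠ 3 := by
  set F := s.filter fun c => gap s c = 5
  set O := s.filter fun c => gap s c = 1
  -- Each gap of length 5 is preceded by a gap of length 1, and `hone` makes this a bijection.
  have hFO : F.image (· - 1) = O := by
    refine eq_of_subset_of_card_le (fun o ho => ?_) ?_
    · obtain ⟨b, hb, rfl⟩ := mem_image.1 ho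
      obtain ⟨hbs, hb5⟩ := mem_filter.1 hb
      have hb1 := hLD.sub_one_mem_of_gap_eq_five hn hb5
      exact mem_filter.2 ⟨hb1, (gap_eq_one_iff hb1).2 (by simpa using hbs)⟩
    · calc O.card ≤ (F.image (nextMem s)).card := card_le_card fun o ho => by
            obtain ⟨hos, ho1⟩ := mem_filter.1 ho
            obtain ⟨b, hbs, hb5, rfl⟩ := hone o hos ho1
            exact mem_image_of_mem _ (mem_filter.2 ⟨hbs, hb5⟩)
        _ ≤ F.card := card_image_le
        _ = (F.image (· - 1)).card := (card_image_of_injective _ (sub_left_injective)).symm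
  intro h3
  rcases hLD.sub_one_mem_or_gap_nextMem_eq_one_of_gap_eq_three hn hc h3 with h | h
  · have : c - 1 ∈ F.image (· - 1) :=
      hFO ▸ mem_filter.2 ⟨h, (gap_eq_one_iff h).2 (by simpa using hc)⟩
    obtain ⟨b, hb, hbc⟩ := mem_image.1 this
    obtain rfl := sub_left_injective hbc
    exact absurd (mem_filter.1 hb).2 (by omega)
  · obtain ⟨b, hbs, hb5, hbc⟩ := hone _ (nextMem_mem hc) h
    obtain rfl := nextMem_injOn hbs hc hbc
    omega

theorem IsLD.lt_three_mul_card [NeZero n] (hn : 9 ≤ n) (hodd : Odd n)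
    (hLD : IsLD (cycleG n) 2 (s : Set (ZMod n))) : n < 3 * s.card := by
  have hpair := fun c (hc : c ∈ bigGaps s) => hLD.gap_add_gap_partner_le_six hn hc
  have hsplit (f : ZMod n → ℕ) : ∑ c ∈ s, f c =
      ∑ c ∈ bigGaps s, (f c + f (partner s c)) + ∑ c ∈ unpaired s, f c :=
    sum_eq_sum_add_sum_sdiff_of_injOn (filter_subset _ s)
      (fun c hc => hLD.partner_mem_sdiff hn hc) injOn_partner f
  have hsum := (sum_gap (hLD.nonempty (by omega))).symm.trans (hsplit (gap s))
  have hcard := hsplit fun _ => 1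
  have hunpaired : ∀ c ∈ unpaired s, gap s c ≤ 3 := fun c hc => by
    obtain ⟨hcs, hc'⟩ := mem_sdiff.1 hc
    simp only [bigGaps, mem_union, mem_filter, not_or, not_and, not_le] at hc'
    exact Nat.le_of_lt_succ (hc'.1 hcs)
  have h6 := sum_le_sum fun c hc => (hpair c hc).1
  have h3 := sum_le_sum hunpaired
  simp only [sum_const, smul_eq_mul] at h6 h3 hcard
  -- Equality forces every pair to sum to 6 and every unpaired gap to be 3.
  by_contra! hge
  have e6 := (sum_eq_sum_iff_of_le fun c hc => (hpair c hc).1).1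
    (by simp only [sum_const, smul_eq_mul]; omega)
  have e3 := (sum_eq_sum_iff_of_le hunpaired).1 (by simp only [sum_const, smul_eq_mul]; omega)
  have hone : ∀ c ∈ s, gap s c = 1 → ∃ b ∈ s, gap s b = 5 ∧ nextMem s b = c := by
    intro c hc h1
    have : c ∈ (bigGaps s).image (partner s) := by
      by_contra hc'
      refine absurd (e3 c (mem_sdiff.2 ⟨hc, fun h => (mem_union.1 h).elim (fun hb => ?_) hc'⟩))
        (by omega)
      have := (mem_filter.1 hb).2
      omega
    obtain ⟨b, hb, rfl⟩ := mem_image.1 this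
    exact ⟨b, (mem_filter.1 hb).1, by have := e6 b hb; omega, ((hpair b hb).2 (e6 b hb)).symm⟩
  have hempty : unpaired s = ∅ := eq_empty_of_forall_notMem fun c hc =>
    hLD.gap_ne_three hn hone (mem_sdiff.1 hc).1 (e3 c hc)
  rw [hempty, sum_empty, sum_congr rfl e6, sum_const, smul_eq_mul] at hsum
  obtain ⟨m, hm⟩ := hodd
  omega

theorem IsLD.lt_three_mul_ncard [NeZero n] (hn : 9 ≤ n) (hodd : Odd n) {D : Set (ZMod n)}
    (hLD : IsLD (cycleG n) 2 D) : n < 3 * D.ncard := by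
  obtain ⟨s, rfl⟩ : ∃ s : Finset (ZMod n), ↑s = D := ⟨_, D.toFinite.coe_toFinset⟩
  rw [Set.ncard_coe_finset]
  exact hLD.lt_three_mul_card hn hodd

end LowerBound

section Construction

variable {n : ℕ}

def zeroTwoModSix (n : ℕ) : Set (ZMod n) :=
  {x | x.val % 6 = 0 ∨ x.val % 6 = 2}

lemma add_intCast_mem_zeroTwoModSix_iff [NeZero n] (x : ZMod n) {j : ℤ} (h0 : 0 ≤ x.val + j)
    (h1 : x.val + j < n) :
    x + j ∈ zeroTwoModSix n ↔ (x.val + j) % 6 = 0 ∨ (x.val + j) % 6 = 2 := by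
  have hval : ((x + j).val : ℤ) = x.val + j := by
    rw [← Int.emod_eq_of_lt h0 h1, ← ZMod.val_intCast]
    push_cast [ZMod.natCast_zmod_val]
    rfl
  simp only [zeroTwoModSix, Set.mem_ofPred_eq]
  omega

theorem isLD_zeroTwoModSix (hn : 9 ≤ n) (h3 : n % 6 = 3) :
    IsLD (cycleG n) 2 (zeroTwoModSix n) := by
  have : NeZero n := ⟨by omega⟩
  rw [isLD_cycleG_iff (by omega)]
  refine ⟨fun x hx => ?_, fun x d hd1 hd4 hx hxd hDr => ?_⟩
  all_goals
    have hv := ZMod.val_lt x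
    simp only [zeroTwoModSix, Set.mem_ofPred_eq] at hx
  · obtain ⟨j, hj, h0, h1, hmod⟩ : ∃ j : ℤ, j.natAbs ≤ 2 ∧ 0 ≤ x.val + j ∧ x.val + j < n ∧
        ((x.val + j) % 6 = 0 ∨ (x.val + j) % 6 = 2) := by
      rcases (by omega : x.val % 6 = 1 ∨ x.val % 6 = 3 ∨ x.val % 6 = 4 ∨ x.val % 6 = 5)
        with h | h | h | h
      exacts [⟨-1, by omega⟩, ⟨-1, by omega⟩, ⟨-2, by omega⟩, ⟨1, by omega⟩]
    exact ⟨x + j, (mem_Dr_cycleG_iff (by omega)).2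
      ⟨(add_intCast_mem_zeroTwoModSix_iff x h0 h1).2 hmod, j, hj, rfl⟩⟩
  · have hxd' (h : x.val + d < n) : ¬((x.val + d) % 6 = 0 ∨ (x.val + d) % 6 = 2) := by
      rwa [← add_intCast_mem_zeroTwoModSix_iff x (by omega) h]
    obtain ⟨j, hj1, hj2, hj3, h0, h1, hmod⟩ : ∃ j : ℤ, -2 ≤ j ∧ j ≤ d + 2 ∧ (j < d - 2 ∨ 2 < j) ∧
        0 ≤ x.val + j ∧ x.val + j < n ∧ ((x.val + j) % 6 = 0 ∨ (x.val + j) % 6 = 2) := by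
      rcases (by omega : x.val % 6 = 1 ∨ x.val % 6 = 3 ∨ x.val % 6 = 4 ∨ x.val % 6 = 5)
        with h | h | h | h
      exacts [⟨-1, by omega⟩, ⟨3, by omega⟩, ⟨-2, by omega⟩, ⟨3, by omega⟩]
    exact (Dr_cycleG_eq_Dr_add_iff hn x hd1 hd4).1 hDr j hj1 hj2 hj3
      ((add_intCast_mem_zeroTwoModSix_iff x h0 h1).2 hmod)

lemma ncard_zeroTwoModSix [NeZero n] :
    (zeroTwoModSix n).ncard = Nat.count (fun v => v % 6 = 0 ∨ v % 6 = 2) n := by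
  have himage : ZMod.val '' zeroTwoModSix n =
      ↑((Finset.range n).filter fun v => v % 6 = 0 ∨ v % 6 = 2) := by
    ext v
    simp only [zeroTwoModSix, Set.mem_image, Set.mem_ofPred_eq, Finset.coe_filter,
      Finset.mem_range]
    constructor
    · rintro ⟨x, hx, rfl⟩
      exact ⟨ZMod.val_lt x, hx⟩
    · rintro ⟨hv, hx⟩
      exact ⟨v, by rwa [ZMod.val_cast_of_lt hv], ZMod.val_cast_of_lt hv⟩
  rw [← Set.ncard_image_of_injective _ (ZMod.val_injective _), himage, Set.ncard_coe_finset,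
    Nat.count_eq_card_filter_range]

lemma count_mod_six_eq_zero_or_two (k : ℕ) :
    Nat.count (fun v => v % 6 = 0 ∨ v % 6 = 2) (6 * k + 3) = 2 * k + 2 := by
  induction k with
  | zero => decide
  | succ k ih =>
    rw [show 6 * (k + 1) + 3 = 6 * k + 3 + 6 by ring, Nat.count_add, ih]
    simp only [Nat.count_succ, Nat.count_zero]
    split_ifs <;> omega

end Construction

section SixCycle

lemma exists_intCast_eq_iff_ne_add_three (x y : ZMod 6) :
    (∃ j : ℤ, j.natAbs ≤ 2 ∧ y = x + j) ↔ y ≠ x + 3 := by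
  constructor
  · rintro ⟨j, hj, rfl⟩ h
    obtain rfl | rfl | rfl | rfl | rfl : j = -2 ∨ j = -1 ∨ j = 0 ∨ j = 1 ∨ j = 2 := by omega
    all_goals revert h; push_cast; revert x; decide
  · intro h
    obtain ⟨j, hj, hyx⟩ : ∃ j ∈ ({-2, -1, 0, 1, 2} : Finset ℤ), y - x = j := by
      have key : ∀ z : ZMod 6, z ≠ 3 → ∃ j ∈ ({-2, -1, 0, 1, 2} : Finset ℤ), z = j := by decide
      exact key _ fun h' => h (by rw [← h']; ring)
    refine ⟨j, ?_, by rw [← hyx]; ring⟩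
    simp only [Finset.mem_insert, Finset.mem_singleton] at hj
    omega

lemma Dr_cycleG_six (D : Set (ZMod 6)) (x : ZMod 6) : Dr (cycleG 6) 2 D x = D \ {x + 3} := by
  ext y
  rw [mem_Dr_cycleG_iff (by norm_num), exists_intCast_eq_iff_ne_add_three]
  rfl

lemma isLD_cycleG_six_iff (F : Finset (ZMod 6)) :
    IsLD (cycleG 6) 2 (F : Set (ZMod 6)) ↔ (∀ x ∉ F, (F.erase (x + 3)).Nonempty) ∧
      ∀ x ∉ F, ∀ y ∉ F, x ≠ y → F.erase (x + 3) ≠ F.erase (y + 3) := by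
  simp only [IsLD, Dr_cycleG_six, ← Finset.coe_erase, Finset.coe_nonempty, Finset.mem_coe,
    Ne, Finset.coe_inj]

theorem isLeast_ncard_isLD_cycleG_six :
    IsLeast {m | ∃ D : Set (ZMod 6), IsLD (cycleG 6) 2 D ∧ D.ncard = m} 3 := by
  refine ⟨⟨(({0, 1, 2} : Finset (ZMod 6)) : Set (ZMod 6)), (isLD_cycleG_six_iff _).2 (by decide),
    by rw [Set.ncard_coe_finset]; rfl⟩, ?_⟩
  rintro m ⟨D, hD, rfl⟩
  obtain ⟨F, rfl⟩ : ∃ F : Finset (ZMod 6), ↑F = D := ⟨_, D.toFinite.coe_toFinset⟩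
  have hcard : ∀ F : Finset (ZMod 6), ((∀ x ∉ F, (F.erase (x + 3)).Nonempty) ∧
      ∀ x ∉ F, ∀ y ∉ F, x ≠ y → F.erase (x + 3) ≠ F.erase (y + 3)) → 3 ≤ F.card := by
    decide
  rw [Set.ncard_coe_finset]
  exact hcard F ((isLD_cycleG_six_iff F).1 hD)

end SixCycle

theorem stmt18 (k : ℕ) (hk : 1 ≤ k) :
    IsLeast {m | ∃ D : Set (ZMod (6*k+3)),
        IsLD (cycleG (6*k+3)) 2 D ∧ D.ncard = m} ((6*k+3+2)/3 + 1) ∧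
    (6*k+3+2)/3 + 1 = 2*k+2 ∧
    IsLeast {m | ∃ D : Set (ZMod 6),
        IsLD (cycleG 6) 2 D ∧ D.ncard = m} 3 := by
  have : NeZero (6 * k + 3) := ⟨by omega⟩
  have hsize : (6 * k + 3 + 2) / 3 + 1 = 2 * k + 2 := by omega
  refine ⟨?_, hsize, isLeast_ncard_isLD_cycleG_six⟩
  rw [hsize]
  refine ⟨⟨zeroTwoModSix _, isLD_zeroTwoModSix (by omega) (by omega), ?_⟩, ?_⟩
  · rw [ncard_zeroTwoModSix, count_mod_six_eq_zero_or_two]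
  · rintro m ⟨D, hD, rfl⟩
    have := hD.lt_three_mul_ncard (by omega) ⟨3 * k + 1, by ring⟩
    omega
end
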